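/- arXiv:1308.3933 — 4 statements merged into one kernel-verified Lean document; each statement's English description precedes it below -/
import Mathlib

section
/- (John–Nirenberg lemma) There exists a positive constant A, depending only on the doubling constant c_D, such that for every ball B ⊂ X and every locally integrable function f that is of bounded mean oscillation on 5B (i.e. ‖f‖_* = sup ⨍_{B'} |f − f_{B'}| dμ < ∞, the supremum taken over all balls B' ⊂ 5B) and for every λ > 0, μ({x ∈ B : |f(x) − f_B| > λ}) ≤ 2 μ(B) exp(−A λ / ‖f‖_*). -/
open MeasureTheory Metric ENNReal

section Defs

variable {X : Type*} [MetricSpace X] [MeasurableSpace X]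

/-- The doubling condition from the paper: `μ` is nontrivial and finite on balls, and
`μ(B(x,2r)) ≤ c_D μ(B(y,r))` whenever `B(x,2r) ∩ B(y,r) ≠ ∅`. -/
def IsDoublingWith (μ : Measure X) (cD : ℝ) : Prop :=
  1 < cD ∧
  (∀ (x : X) (r : ℝ), 0 < r → 0 < μ (ball x r) ∧ μ (ball x r) < ⊤) ∧
  ∀ (x y : X) (r : ℝ), 0 < r → (ball x (2 * r) ∩ ball y r).Nonempty →
    μ (ball x (2 * r)) ≤ ENNReal.ofReal cD * μ (ball y r)

/-- Mean oscillation of `f` over the ball `B(x,r)`: `⨍_B |f - f_B| dμ`. -/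
noncomputable def avgOsc (μ : Measure X) (f : X → ℝ) (x : X) (r : ℝ) : ℝ :=
  ⨍ y in ball x r, |f y - ⨍ z in ball x r, f z ∂μ| ∂μ

/-- The set of mean oscillations of `f` over all balls. -/
def bmoSet (μ : Measure X) (f : X → ℝ) : Set ℝ :=
  {a | ∃ x r, 0 < r ∧ a = avgOsc μ f x r}

/-- `f ∈ BMO(X)`: locally integrable with uniformly bounded mean oscillations. -/
def MemBMO (μ : Measure X) (f : X → ℝ) : Prop :=
  LocallyIntegrable f μ ∧ BddAbove (bmoSet μ f)

/-- The BMO seminorm `‖f‖_* = sup_B ⨍_B |f - f_B| dμ`. -/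
noncomputable def bmoNorm (μ : Measure X) (f : X → ℝ) : ℝ :=
  sSup (bmoSet μ f)

end Defs

/-- The BMO seminorm of `f` localized to balls contained in `U`. -/
noncomputable def bmoNormIn {X : Type*} [MetricSpace X] [MeasurableSpace X]
    (μ : Measure X) (f : X → ℝ) (U : Set X) : ℝ :=
  sSup {a | ∃ x r, 0 < r ∧ ball x r ⊆ U ∧ a = avgOsc μ f x r}

/-!
Calderón–Zygmund stopping time. Let `N` bound the mean oscillations of `f` on balls inside `5B`,
let `Q` be a ball with `2Q ⊆ 5B` and `g = |f - f_Q|` on `2Q`. Lebesgue differentiation and the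
Vitali covering lemma cover almost all of `{x ∈ Q : g x > c + 5 cD⁷ N}` by the sixfold
enlargements of disjoint balls `Bᵢ` on which the mean of `g` exceeds `t = 4 cD⁶ N`, while its
mean on `2Bᵢ` is at most `t`. Hence `∑ μ(Bᵢ) ≤ ‖g‖₁ / t ≤ μ(Q) / (2 cD³)` and
`|f_{6Bᵢ} - f_Q| ≤ t + cD² N ≤ 5 cD⁷ N`, so the level set of `Q` at height `c + 5 cD⁷ N` is
controlled by those of the balls `6Bᵢ` at height `c`, with half the constant. By induction
`μ{x ∈ Q : |f - f_Q| > 5 n cD⁷ N} ≤ 2⁻ⁿ μ(Q)`, which is exponential decay with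
`A = log 2 / (5 cD⁷)`.
-/

open Set Filter Topology

section

variable {α : Type*} [MeasurableSpace α] {μ : Measure α} {s t : Set α} {f g : α → ℝ}

lemma measureReal_mul_abs_setAverage_sub_le (hs : μ s ≠ ∞) (hf : IntegrableOn f s μ) (c : ℝ) :
    μ.real s * |⨍ x in s, f x ∂μ - c| ≤ ∫ x in s, |f x - c| ∂μ := by
  have h : μ.real s * (⨍ x in s, f x ∂μ - c) = ∫ x in s, (f x - c) ∂μ := by
    rw [mul_sub, ← smul_eq_mul, measure_smul_setAverage f hs,
      integral_sub hf (integrableOn_const hs), setIntegral_const, smul_eq_mul]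
  calc μ.real s * |⨍ x in s, f x ∂μ - c| = |∫ x in s, (f x - c) ∂μ| := by
        rw [← h, abs_mul, abs_of_nonneg measureReal_nonneg]
    _ ≤ ∫ x in s, |f x - c| ∂μ := abs_integral_le_integral_abs

lemma measureReal_mul_abs_setAverage_sub_setAverage_le (hst : s ⊆ t) (ht : μ t ≠ ∞)
    (hf : IntegrableOn f t μ) :
    μ.real s * |⨍ x in s, f x ∂μ - ⨍ x in t, f x ∂μ|
      ≤ μ.real t * ⨍ x in t, |f x - ⨍ y in t, f y ∂μ| ∂μ := by
  calc μ.real s * |⨍ x in s, f x ∂μ - ⨍ x in t, f x ∂μ|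
      ≤ ∫ x in s, |f x - ⨍ y in t, f y ∂μ| ∂μ :=
        measureReal_mul_abs_setAverage_sub_le (measure_ne_top_of_subset hst ht) (hf.mono_set hst) _
    _ ≤ ∫ x in t, |f x - ⨍ y in t, f y ∂μ| ∂μ :=
        setIntegral_mono_set (hf.sub (integrableOn_const ht)).abs
          (Eventually.of_forall fun _ => abs_nonneg _) hst.eventuallyLE
    _ = μ.real t * ⨍ x in t, |f x - ⨍ y in t, f y ∂μ| ∂μ :=
        (measure_smul_setAverage _ ht).symm

lemma setAverage_le_integral_div (hg : Integrable g μ) (hg0 : 0 ≤ g) (s : Set α) :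
    ⨍ x in s, g x ∂μ ≤ (∫ x, g x ∂μ) / μ.real s := by
  rw [setAverage_eq, smul_eq_mul, inv_mul_eq_div]
  exact div_le_div_of_nonneg_right (setIntegral_le_integral hg (Eventually.of_forall hg0))
    measureReal_nonneg

lemma tsum_measure_le_ofReal_integral_div {ι : Type*} {u : Set ι} {s : ι → Set α}
    (hu : u.Countable) (hs : ∀ i ∈ u, MeasurableSet (s i)) (hdisj : u.PairwiseDisjoint s)
    (hs_fin : ∀ i ∈ u, μ (s i) ≠ ∞) (hg : Integrable g μ) (hg0 : 0 ≤ g) {t : ℝ} (ht : 0 < t)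
    (hlt : ∀ i ∈ u, t < ⨍ x in s i, g x ∂μ) :
    ∑' i : u, μ (s i) ≤ ENNReal.ofReal ((∫ x, g x ∂μ) / t) := by
  have := hu.to_subtype
  have hg0' : 0 ≤ᵐ[μ] g := Eventually.of_forall hg0
  have hball (i : u) : ENNReal.ofReal t * μ (s i) ≤ ∫⁻ x in s i, ENNReal.ofReal (g x) ∂μ := by
    rw [← ofReal_integral_eq_lintegral_ofReal hg.integrableOn (ae_restrict_of_ae hg0'),
      ← ofReal_measureReal (hs_fin i i.2), ← ENNReal.ofReal_mul ht.le,
      ← measure_smul_setAverage _ (hs_fin i i.2), smul_eq_mul, mul_comm]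
    gcongr
    exact (hlt i i.2).le
  rw [ENNReal.ofReal_div_of_pos ht, ENNReal.le_div_iff_mul_le (by simp [ht]) (by simp), mul_comm]
  calc ENNReal.ofReal t * ∑' i : u, μ (s i)
      = ∑' i : u, ENNReal.ofReal t * μ (s i) := ENNReal.tsum_mul_left.symm
    _ ≤ ∑' i : u, ∫⁻ x in s i, ENNReal.ofReal (g x) ∂μ := ENNReal.tsum_le_tsum hball
    _ = ∫⁻ x in ⋃ i : u, s i, ENNReal.ofReal (g x) ∂μ :=
        (lintegral_iUnion (fun i : u => hs i i.2) (hdisj.subtype _ _) _).symm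
    _ ≤ ∫⁻ x, ENNReal.ofReal (g x) ∂μ := setLIntegral_le_lintegral _ _
    _ = ENNReal.ofReal (∫ x, g x ∂μ) := (ofReal_integral_eq_lintegral_ofReal hg hg0').symm

lemma measure_le_mul_tsum_of_measure_sdiff_biUnion_eq_zero {ι : Type*} {E : Set α} {u : Set ι}
    (hu : u.Countable) {B C : ι → Set α} {K : ℝ≥0∞} (hnull : μ (E \ ⋃ i ∈ u, B i) = 0)
    (hE : ∀ i ∈ u, μ (E ∩ B i) ≤ K * μ (C i)) :
    μ E ≤ K * ∑' i : u, μ (C i) :=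
  calc μ E ≤ μ (E ∩ ⋃ i ∈ u, B i) + μ (E \ ⋃ i ∈ u, B i) := measure_le_inter_add_sdiff _ _ _
    _ = μ (⋃ i ∈ u, E ∩ B i) := by rw [hnull, add_zero, inter_iUnion₂]
    _ ≤ ∑' i : u, μ (E ∩ B i) := measure_biUnion_le μ hu _
    _ ≤ ∑' i : u, K * μ (C i) := ENNReal.tsum_le_tsum fun i => hE i i.2
    _ = K * ∑' i : u, μ (C i) := ENNReal.tsum_mul_left

end

lemma exists_dyadic_stopping_radius {F : ℝ → ℝ} {R t : ℝ} (hR : 0 < R) (htop : F R ≤ t)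
    (hex : ∃ k : ℕ, t < F (R / 2 ^ k)) :
    ∃ ρ, 0 < ρ ∧ ρ ≤ R / 2 ∧ t < F ρ ∧ F (2 * ρ) ≤ t := by
  classical
  have hk0 : Nat.find hex ≠ 0 := fun h => by
    have := Nat.find_spec hex
    rw [h, pow_zero, div_one] at this
    linarith
  obtain ⟨j, hj⟩ := Nat.exists_eq_succ_of_ne_zero hk0
  refine ⟨R / 2 ^ Nat.find hex, by positivity, ?_, Nat.find_spec hex, ?_⟩
  · rw [hj]
    gcongr
    exact le_self_pow₀ one_le_two j.succ_ne_zero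
  · have hmin := Nat.find_min hex (show j < Nat.find hex by omega)
    have h2 : 2 * (R / 2 ^ Nat.find hex) = R / 2 ^ j := by
      rw [hj, pow_succ]
      field_simp
    exact h2 ▸ not_lt.1 hmin

namespace IsDoublingWith

variable {X : Type*} [MetricSpace X] [MeasurableSpace X] {μ : Measure X} {cD : ℝ}

lemma one_lt (hD : IsDoublingWith μ cD) : 1 < cD := hD.1

lemma pos (hD : IsDoublingWith μ cD) : 0 < cD := zero_lt_one.trans hD.one_lt

lemma measure_ball_pos (hD : IsDoublingWith μ cD) (x : X) {r : ℝ} (hr : 0 < r) :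
    0 < μ (ball x r) :=
  (hD.2.1 x r hr).1

lemma measure_ball_ne_top (hD : IsDoublingWith μ cD) (x : X) {r : ℝ} (hr : 0 < r) :
    μ (ball x r) ≠ ∞ :=
  (hD.2.1 x r hr).2.ne

lemma measureReal_ball_pos (hD : IsDoublingWith μ cD) (x : X) {r : ℝ} (hr : 0 < r) :
    0 < μ.real (ball x r) :=
  ENNReal.toReal_pos (hD.measure_ball_pos x hr).ne' (hD.measure_ball_ne_top x hr)

lemma measure_ball_two_mul_le (hD : IsDoublingWith μ cD) (x : X) {r : ℝ} (hr : 0 < r) :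
    μ (ball x (2 * r)) ≤ ENNReal.ofReal cD * μ (ball x r) :=
  hD.2.2 x x r hr ⟨x, mem_ball_self (by positivity), mem_ball_self hr⟩

lemma measure_ball_le_pow_mul (hD : IsDoublingWith μ cD) (x : X) {r r' : ℝ} (hr : 0 < r)
    {k : ℕ} (hr' : r' ≤ 2 ^ k * r) :
    μ (ball x r') ≤ ENNReal.ofReal (cD ^ k) * μ (ball x r) := by
  refine (measure_mono (ball_subset_ball hr')).trans ?_
  clear hr'
  induction k with
  | zero => simp
  | succ k ih =>
    calc μ (ball x (2 ^ (k + 1) * r)) = μ (ball x (2 * (2 ^ k * r))) := by ring_nf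
      _ ≤ ENNReal.ofReal cD * μ (ball x (2 ^ k * r)) := hD.measure_ball_two_mul_le x (by positivity)
      _ ≤ ENNReal.ofReal cD * (ENNReal.ofReal (cD ^ k) * μ (ball x r)) := by gcongr
      _ = ENNReal.ofReal (cD ^ (k + 1)) * μ (ball x r) := by
        rw [← mul_assoc, ← ENNReal.ofReal_mul hD.pos.le, pow_succ']

lemma measureReal_ball_le_pow_mul (hD : IsDoublingWith μ cD) (x : X) {r r' : ℝ} (hr : 0 < r)
    {k : ℕ} (hr' : r' ≤ 2 ^ k * r) :
    μ.real (ball x r') ≤ cD ^ k * μ.real (ball x r) := by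
  have h := ENNReal.toReal_mono (by finiteness [hD.measure_ball_ne_top x hr])
    (hD.measure_ball_le_pow_mul x hr hr')
  rwa [ENNReal.toReal_mul, ENNReal.toReal_ofReal (by positivity [hD.pos])] at h

lemma isLocallyFiniteMeasure (hD : IsDoublingWith μ cD) : IsLocallyFiniteMeasure μ :=
  ⟨fun x => ⟨ball x 1, ball_mem_nhds x one_pos, (hD.measure_ball_ne_top x one_pos).lt_top⟩⟩

lemma isUnifLocDoublingMeasure (hD : IsDoublingWith μ cD) : IsUnifLocDoublingMeasure μ := by
  refine ⟨⟨(cD ^ 2).toNNReal, eventually_nhdsWithin_of_forall fun r (hr : 0 < r) x => ?_⟩⟩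
  calc μ (closedBall x (2 * r)) ≤ μ (ball x (2 ^ 2 * r)) :=
        measure_mono (closedBall_subset_ball (by linarith))
    _ ≤ ENNReal.ofReal (cD ^ 2) * μ (ball x r) := hD.measure_ball_le_pow_mul x hr le_rfl
    _ ≤ (cD ^ 2).toNNReal * μ (closedBall x r) := by
      rw [ENNReal.ofReal]; gcongr; exact ball_subset_closedBall

lemma lt_setAverage_ball_two_mul (hD : IsDoublingWith μ cD) {h : X → ℝ} {x : X} {ρ t : ℝ}
    (hh : IntegrableOn h (ball x (2 * ρ)) μ) (h0 : 0 ≤ h) (hρ : 0 < ρ) (ht : 0 ≤ t)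
    (hlt : cD * t < ⨍ w in closedBall x ρ, h w ∂μ) :
    t < ⨍ w in ball x (2 * ρ), h w ∂μ := by
  have hCB : closedBall x ρ ⊆ ball x (2 * ρ) := closedBall_subset_ball (by linarith)
  have hB := hD.measureReal_ball_pos x (show 0 < 2 * ρ by positivity)
  have hBC : μ.real (ball x (2 * ρ)) ≤ cD * μ.real (closedBall x ρ) := by
    refine (hD.measureReal_ball_le_pow_mul x hρ (k := 1) (by rw [pow_one])).trans ?_
    rw [pow_one]
    exact mul_le_mul_of_nonneg_left (measureReal_mono ball_subset_closedBall
      (measure_ne_top_of_subset hCB (hD.measure_ball_ne_top x (by positivity)))) hD.pos.le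
  have hC : 0 < μ.real (closedBall x ρ) := by nlinarith [hD.pos]
  rw [setAverage_eq, smul_eq_mul, lt_inv_mul_iff₀ hB]
  rw [setAverage_eq, smul_eq_mul, lt_inv_mul_iff₀ hC] at hlt
  calc μ.real (ball x (2 * ρ)) * t ≤ μ.real (closedBall x ρ) * (cD * t) := by nlinarith
    _ < ∫ w in closedBall x ρ, h w ∂μ := hlt
    _ ≤ ∫ w in ball x (2 * ρ), h w ∂μ :=
      setIntegral_mono_set hh (Eventually.of_forall h0) hCB.eventuallyLE

/-- Disjoint balls of a fixed radius have positive measure and the measure is σ-finite, so every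
maximal separated set is countable. -/
lemma secondCountableTopology [OpensMeasurableSpace X] (hD : IsDoublingWith μ cD) :
    SecondCountableTopology X := by
  refine Metric.secondCountable_of_almost_dense_set fun ε hε => ?_
  obtain ⟨N, hN⟩ := zorn_subset {N : Set X | N ⊆ univ ∧ IsSeparated ε.toNNReal N}
    fun c hc hchain => ⟨⋃₀ c, ⟨subset_univ _, (pairwise_sUnion hchain.directedOn).2
      fun s hs => (hc hs).2⟩, fun _ hs => subset_sUnion_of_mem hs⟩
  have hsep : N.PairwiseDisjoint fun x => ball x (ε / 2) := fun x hx y hy hxy => by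
    have h : ENNReal.ofReal ε < ENNReal.ofReal (dist x y) := by
      rw [← edist_dist]; exact hN.prop.2 hx hy hxy
    exact ball_disjoint_ball (by linarith [(ENNReal.ofReal_lt_ofReal_iff'.1 h).1])
  refine ⟨N, ?_, fun x => ?_⟩
  · rcases N.eq_empty_or_nonempty with rfl | ⟨p, -⟩
    · exact countable_empty
    have : SigmaFinite μ := Measure.sigmaFinite_of_countable
      (countable_range fun n : ℕ => ball p (n + 1))
      (forall_mem_range.2 fun n => (hD.measure_ball_ne_top p n.cast_add_one_pos).lt_top)
      (by rw [sUnion_range, iUnion_ball_nat_succ])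
    have := Measure.countable_meas_pos_of_disjoint_iUnion (μ := μ)
      (As := fun x : N => ball (x : X) (ε / 2)) (fun _ => measurableSet_ball) (hsep.subtype _ _)
    simp only [hD.measure_ball_pos _ (half_pos hε), ofPred_true, countable_univ_iff,
      countable_coe_iff] at this
    exact this
  · obtain ⟨y, hy, hxy⟩ := IsCover.of_maximal_isSeparated hN (mem_univ x)
    exact ⟨y, hy, (edist_le_ofReal hε.le).1 hxy⟩

variable [BorelSpace X] {h : X → ℝ}

lemma integrable_indicator_abs_sub (hD : IsDoublingWith μ cD) {f : X → ℝ} {y : X} {r : ℝ}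
    (hf : IntegrableOn f (ball y r) μ) (hr : 0 < r) (c : ℝ) :
    Integrable ((ball y r).indicator fun z => |f z - c|) μ :=
  IntegrableOn.integrable_indicator (hf.sub (integrableOn_const (hD.measure_ball_ne_top y hr))).abs
    measurableSet_ball

lemma ae_exists_lt_setAverage_ball (hD : IsDoublingWith μ cD) (hh : Integrable h μ) (h0 : 0 ≤ h)
    {R t : ℝ} (hR : 0 < R) (ht : 0 ≤ t) :
    ∀ᵐ x ∂μ, cD * t < h x → ∃ k : ℕ, t < ⨍ w in ball x (R / 2 ^ k), h w ∂μ := by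
  have := hD.isLocallyFiniteMeasure
  have := hD.isUnifLocDoublingMeasure
  have := hD.secondCountableTopology
  have hδ : Tendsto (fun k : ℕ => R / 2 ^ (k + 1)) atTop (𝓝[>] 0) :=
    tendsto_nhdsWithin_iff.2 ⟨((tendsto_const_nhds (x := R)).div_atTop
      (tendsto_pow_atTop_atTop_of_one_lt (one_lt_two : (1 : ℝ) < 2))).comp
      (tendsto_add_atTop_nat 1), Eventually.of_forall fun k => by simp only [mem_Ioi]; positivity⟩
  filter_upwards [IsUnifLocDoublingMeasure.ae_tendsto_average μ hh.locallyIntegrable 1]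
    with x hx hxt
  obtain ⟨k, hk⟩ := ((hx (fun _ => x) _ hδ (Eventually.of_forall fun k => by
    simp [(show 0 < R / 2 ^ (k + 1) by positivity).le])).eventually (lt_mem_nhds hxt)).exists
  refine ⟨k, ?_⟩
  have h2 : 2 * (R / 2 ^ (k + 1)) = R / 2 ^ k := by rw [pow_succ]; field_simp
  simpa only [h2] using hD.lt_setAverage_ball_two_mul hh.integrableOn h0 (by positivity) ht hk

lemma exists_stopping_balls (hD : IsDoublingWith μ cD) (hh : Integrable h μ) (h0 : 0 ≤ h)
    {E : Set X} {R t : ℝ} (hR : 0 < R) (ht : 0 ≤ t)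
    (htop : ∀ x ∈ E, ⨍ w in ball x R, h w ∂μ ≤ t) (hE : ∀ x ∈ E, cD * t < h x) :
    ∃ (u : Set X) (ρ : X → ℝ), u ⊆ E ∧ u.Countable ∧ u.PairwiseDisjoint (fun b => ball b (ρ b)) ∧
      (∀ b ∈ u, 0 < ρ b ∧ ρ b ≤ R / 2 ∧ t < ⨍ w in ball b (ρ b), h w ∂μ ∧
        ⨍ w in ball b (2 * ρ b), h w ∂μ ≤ t) ∧
      μ (E \ ⋃ b ∈ u, ball b (6 * ρ b)) = 0 := by
  have := hD.secondCountableTopology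
  set G := {x ∈ E | ∃ k : ℕ, t < ⨍ w in ball x (R / 2 ^ k), h w ∂μ}
  have hG : μ (E \ G) = 0 := measure_mono_null
    (fun x hx (hx' : cD * t < h x → _) => hx.2 ⟨hx.1, hx' (hE x hx.1)⟩)
    (ae_iff.1 (hD.ae_exists_lt_setAverage_ball hh h0 hR ht))
  choose! ρ hρ using fun x (hx : x ∈ G) =>
    exists_dyadic_stopping_radius (F := fun r => ⨍ w in ball x r, h w ∂μ) hR (htop x hx.1) hx.2
  obtain ⟨u, huG, hdisj, hcover⟩ := Vitali.exists_disjoint_subfamily_covering_enlargement_closedBall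
    G id ρ (R / 2) (fun x hx => (hρ x hx).2.1) 5 (by norm_num)
  have hdisj' : u.PairwiseDisjoint fun b => ball b (ρ b) :=
    hdisj.mono fun _ => ball_subset_closedBall
  have hcover' : G ⊆ ⋃ b ∈ u, ball b (6 * ρ b) := fun x hx => by
    obtain ⟨b, hb, hxb⟩ := hcover x hx
    exact mem_biUnion hb (closedBall_subset_ball (by linarith [(hρ b (huG hb)).1])
      (hxb (mem_closedBall_self (hρ x hx).1.le)))
  exact ⟨u, ρ, huG.trans (sep_subset _ _), hdisj'.countable_of_isOpen (fun _ _ => isOpen_ball)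
    fun b hb => nonempty_ball.2 (hρ b (huG hb)).1, hdisj', fun b hb => hρ b (huG hb),
    measure_mono_null (sdiff_subset_sdiff_right hcover') hG⟩

end IsDoublingWith

section MeanOscillation

variable {X : Type*} [MetricSpace X] [MeasurableSpace X] {μ : Measure X} {cD : ℝ}
  {f : X → ℝ} {U : Set X} {N : ℝ}

lemma avgOsc_nonneg (μ : Measure X) (f : X → ℝ) (y : X) (s : ℝ) : 0 ≤ avgOsc μ f y s := by
  rw [avgOsc, setAverage_eq, smul_eq_mul]
  positivity

def MeanOscBoundedOn (μ : Measure X) (f : X → ℝ) (U : Set X) (N : ℝ) : Prop :=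
  ∀ y s, 0 < s → ball y s ⊆ U → avgOsc μ f y s ≤ N

namespace MeanOscBoundedOn

variable (hD : IsDoublingWith μ cD) (hf : IntegrableOn f U μ) (hosc : MeanOscBoundedOn μ f U N)
include hD hf hosc

lemma abs_setAverage_ball_sub_setAverage_ball_le {y : X} {ρ ρ' : ℝ} (hρ : 0 < ρ) (hρρ' : ρ ≤ ρ')
    {k : ℕ} (hk : ρ' ≤ 2 ^ k * ρ) (hU : ball y ρ' ⊆ U) :
    |⨍ x in ball y ρ, f x ∂μ - ⨍ x in ball y ρ', f x ∂μ| ≤ cD ^ k * N := by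
  have hρ' : 0 < ρ' := hρ.trans_le hρρ'
  refine le_of_mul_le_mul_left ?_ (hD.measureReal_ball_pos y hρ)
  calc μ.real (ball y ρ) * |⨍ x in ball y ρ, f x ∂μ - ⨍ x in ball y ρ', f x ∂μ|
      ≤ μ.real (ball y ρ') * avgOsc μ f y ρ' :=
        measureReal_mul_abs_setAverage_sub_setAverage_le (ball_subset_ball hρρ')
          (hD.measure_ball_ne_top y hρ') (hf.mono_set hU)
    _ ≤ cD ^ k * μ.real (ball y ρ) * N :=
        mul_le_mul (hD.measureReal_ball_le_pow_mul y hρ hk) (hosc y ρ' hρ' hU)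
          (avgOsc_nonneg μ f y ρ') (mul_nonneg (pow_nonneg hD.pos.le k) measureReal_nonneg)
    _ = μ.real (ball y ρ) * (cD ^ k * N) := by ring

lemma setIntegral_abs_sub_setAverage_ball_le {y : X} {ρ ρ' : ℝ} (hρ : 0 < ρ) (hρρ' : ρ ≤ ρ')
    {k : ℕ} (hk : ρ' ≤ 2 ^ k * ρ) (hU : ball y ρ' ⊆ U) :
    ∫ x in ball y ρ', |f x - ⨍ z in ball y ρ, f z ∂μ| ∂μ
      ≤ (1 + cD ^ k) * N * μ.real (ball y ρ') := by
  have hρ' : 0 < ρ' := hρ.trans_le hρρ'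
  have hfin := hD.measure_ball_ne_top y hρ'
  have hdiff := hosc.abs_setAverage_ball_sub_setAverage_ball_le hD hf hρ hρρ' hk hU
  have hint : IntegrableOn (fun x => |f x - ⨍ z in ball y ρ', f z ∂μ|) (ball y ρ') μ :=
    ((hf.mono_set hU).sub (integrableOn_const hfin)).abs
  have hosc' : ∫ x in ball y ρ', |f x - ⨍ z in ball y ρ', f z ∂μ| ∂μ
      = μ.real (ball y ρ') * avgOsc μ f y ρ' :=
    (measure_smul_setAverage _ hfin).symm
  calc ∫ x in ball y ρ', |f x - ⨍ z in ball y ρ, f z ∂μ| ∂μ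
      ≤ ∫ x in ball y ρ', (|f x - ⨍ z in ball y ρ', f z ∂μ| + cD ^ k * N) ∂μ := by
        refine setIntegral_mono ((hf.mono_set hU).sub (integrableOn_const hfin)).abs
          (hint.add (integrableOn_const hfin)) fun x => ?_
        refine (abs_sub_le _ (⨍ z in ball y ρ', f z ∂μ) _).trans ?_
        rw [abs_sub_comm (⨍ z in ball y ρ', f z ∂μ)]
        gcongr
    _ = μ.real (ball y ρ') * avgOsc μ f y ρ' + μ.real (ball y ρ') * (cD ^ k * N) := by
        rw [integral_add hint (integrableOn_const hfin), setIntegral_const, smul_eq_mul, hosc']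
    _ ≤ (1 + cD ^ k) * N * μ.real (ball y ρ') := by
        have := hosc y ρ' hρ' hU
        nlinarith [measureReal_nonneg (μ := μ) (s := ball y ρ')]

lemma abs_setAverage_ball_sub_le_of_setAverage_abs_sub_le {y : X} {ρ ρ' : ℝ} (hρ : 0 < ρ)
    (hρρ' : ρ ≤ ρ') {k : ℕ} (hk : ρ' ≤ 2 ^ k * ρ) (hU : ball y ρ' ⊆ U) {c t : ℝ}
    (hct : ⨍ x in ball y ρ, |f x - c| ∂μ ≤ t) :
    |⨍ x in ball y ρ', f x ∂μ - c| ≤ t + cD ^ k * N := by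
  have hfin := hD.measure_ball_ne_top y hρ
  have hf' : IntegrableOn f (ball y ρ) μ := hf.mono_set ((ball_subset_ball hρρ').trans hU)
  have hc : |⨍ x in ball y ρ, f x ∂μ - c| ≤ t := by
    refine le_of_mul_le_mul_left ?_ (hD.measureReal_ball_pos y hρ)
    calc μ.real (ball y ρ) * |⨍ x in ball y ρ, f x ∂μ - c| ≤ ∫ x in ball y ρ, |f x - c| ∂μ :=
          measureReal_mul_abs_setAverage_sub_le hfin hf' c
      _ = μ.real (ball y ρ) * ⨍ x in ball y ρ, |f x - c| ∂μ :=
          (measure_smul_setAverage _ hfin).symm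
      _ ≤ μ.real (ball y ρ) * t := by gcongr
  have hdiff := hosc.abs_setAverage_ball_sub_setAverage_ball_le hD hf hρ hρρ' hk hU
  calc |⨍ x in ball y ρ', f x ∂μ - c|
      ≤ |⨍ x in ball y ρ', f x ∂μ - ⨍ x in ball y ρ, f x ∂μ| + |⨍ x in ball y ρ, f x ∂μ - c| :=
        abs_sub_le _ _ _
    _ ≤ t + cD ^ k * N := by rw [abs_sub_comm]; linarith

lemma measure_inter_ball_le {y b : X} {s ρ c : ℝ} {M : ℝ≥0∞} (hs : 0 < s)
    (hU : ball y (2 * s) ⊆ U) (hb : b ∈ ball y s) (hρ : 0 < ρ) (hρs : ρ ≤ s / 16)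
    (hstop : ⨍ w in ball b (2 * ρ), |f w - ⨍ v in ball y s, f v ∂μ| ∂μ ≤ 4 * cD ^ 6 * N)
    (hM : μ {z ∈ ball b (6 * ρ) | c < |f z - ⨍ w in ball b (6 * ρ), f w ∂μ|}
      ≤ M * μ (ball b (6 * ρ))) :
    μ ({z ∈ ball y s | c + 5 * cD ^ 7 * N < |f z - ⨍ w in ball y s, f w ∂μ|} ∩ ball b (6 * ρ))
      ≤ M * ENNReal.ofReal (cD ^ 3) * μ (ball b ρ) := by
  have hN : 0 ≤ N := (avgOsc_nonneg μ f y (2 * s)).trans (hosc y _ (by positivity) hU)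
  have hcD : 1 ≤ cD := hD.one_lt.le
  have hby : dist b y < s := hb
  have havg : |⨍ w in ball b (6 * ρ), f w ∂μ - ⨍ v in ball y s, f v ∂μ|
      ≤ 4 * cD ^ 6 * N + cD ^ 2 * N :=
    hosc.abs_setAverage_ball_sub_le_of_setAverage_abs_sub_le hD hf (by positivity) (by linarith)
      (k := 2) (by linarith) ((ball_subset_ball' (by linarith)).trans hU) hstop
  have hK : 4 * cD ^ 6 * N + cD ^ 2 * N ≤ 5 * cD ^ 7 * N := by
    have h6 : cD ^ 6 ≤ cD ^ 7 := pow_le_pow_right₀ hcD (by norm_num)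
    have h2 : cD ^ 2 ≤ cD ^ 7 := pow_le_pow_right₀ hcD (by norm_num)
    nlinarith
  have hlevel : {z ∈ ball y s | c + 5 * cD ^ 7 * N < |f z - ⨍ w in ball y s, f w ∂μ|}
      ∩ ball b (6 * ρ) ⊆ {z ∈ ball b (6 * ρ) | c < |f z - ⨍ w in ball b (6 * ρ), f w ∂μ|} := by
    rintro z ⟨hzE, hzb⟩
    have := abs_sub_le (f z) (⨍ w in ball b (6 * ρ), f w ∂μ) (⨍ v in ball y s, f v ∂μ)
    exact ⟨hzb, by linarith [hzE.2]⟩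
  calc _ ≤ M * μ (ball b (6 * ρ)) := (measure_mono hlevel).trans hM
    _ ≤ M * (ENNReal.ofReal (cD ^ 3) * μ (ball b ρ)) := by
        gcongr
        exact hD.measure_ball_le_pow_mul b hρ (by linarith)
    _ = M * ENNReal.ofReal (cD ^ 3) * μ (ball b ρ) := (mul_assoc _ _ _).symm

variable [BorelSpace X]

lemma integral_indicator_abs_sub_le {y : X} {s : ℝ} (hs : 0 < s) (hU : ball y (2 * s) ⊆ U) :
    ∫ z, (ball y (2 * s)).indicator (fun z => |f z - ⨍ v in ball y s, f v ∂μ|) z ∂μ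
      ≤ (1 + cD) * N * μ.real (ball y (2 * s)) := by
  rw [integral_indicator measurableSet_ball]
  simpa using hosc.setIntegral_abs_sub_setAverage_ball_le hD hf hs (by linarith) (k := 1)
    (by linarith) hU

lemma setAverage_indicator_abs_sub_le {y x : X} {s : ℝ} (hs : 0 < s) (hU : ball y (2 * s) ⊆ U)
    (hx : x ∈ ball y s) :
    ⨍ w in ball x (s / 8),
        (ball y (2 * s)).indicator (fun z => |f z - ⨍ v in ball y s, f v ∂μ|) w ∂μ
      ≤ 4 * cD ^ 6 * N := by
  have hN : 0 ≤ N := (avgOsc_nonneg μ f y (2 * s)).trans (hosc y _ (by positivity) hU)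
  have hcD : 1 ≤ cD := hD.one_lt.le
  have hxy : dist y x < s := by rw [dist_comm]; exact hx
  have hpos := hD.measureReal_ball_pos x (show 0 < s / 8 by positivity)
  have h2Q : μ.real (ball y (2 * s)) ≤ cD ^ 5 * μ.real (ball x (s / 8)) :=
    (measureReal_mono (ball_subset_ball' (by linarith : 2 * s + dist y x ≤ 3 * s))
      (hD.measure_ball_ne_top x (by positivity))).trans
      (hD.measureReal_ball_le_pow_mul x (by positivity) (by linarith))
  have hc : 0 ≤ (3 * cD - 1) * (cD ^ 5 * N) := mul_nonneg (by linarith) (by positivity)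
  calc _ ≤ (1 + cD) * N * μ.real (ball y (2 * s)) / μ.real (ball x (s / 8)) :=
        (setAverage_le_integral_div (hD.integrable_indicator_abs_sub (hf.mono_set hU)
          (by positivity) _) (indicator_nonneg fun _ _ => abs_nonneg _) _).trans
          (by gcongr; exact hosc.integral_indicator_abs_sub_le hD hf hs hU)
    _ ≤ (1 + cD) * N * (cD ^ 5 * μ.real (ball x (s / 8))) / μ.real (ball x (s / 8)) := by
        gcongr
    _ = (1 + cD) * cD ^ 5 * N := by field_simp
    _ ≤ 4 * cD ^ 6 * N := by nlinarith

lemma measure_lt_abs_sub_setAverage_add_le (hN : 0 < N) {c : ℝ} (hc : 0 ≤ c) {M : ℝ≥0∞}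
    (hM : ∀ b ρ, 0 < ρ → ball b (2 * ρ) ⊆ U →
      μ {z ∈ ball b ρ | c < |f z - ⨍ w in ball b ρ, f w ∂μ|} ≤ M * μ (ball b ρ))
    {y : X} {s : ℝ} (hs : 0 < s) (hU : ball y (2 * s) ⊆ U) :
    μ {z ∈ ball y s | c + 5 * cD ^ 7 * N < |f z - ⨍ w in ball y s, f w ∂μ|}
      ≤ M / 2 * μ (ball y s) := by
  set fQ := ⨍ w in ball y s, f w ∂μ
  set E := {z ∈ ball y s | c + 5 * cD ^ 7 * N < |f z - fQ|}
  set g := (ball y (2 * s)).indicator fun z => |f z - fQ|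
  set t := 4 * cD ^ 6 * N
  have hcD : 1 ≤ cD := hD.one_lt.le
  have hg : Integrable g μ := hD.integrable_indicator_abs_sub (hf.mono_set hU) (by positivity) fQ
  have hg0 : 0 ≤ g := indicator_nonneg fun _ _ => abs_nonneg _
  have hE : ∀ x ∈ E, cD * t < g x := fun x hx => by
    rw [show g x = |f x - fQ| from indicator_of_mem (ball_subset_ball (by linarith) hx.1) _]
    have : 0 < cD ^ 7 * N := by positivity
    linarith [hx.2]
  obtain ⟨u, ρ, huE, hu, hdisj, hρ, hnull⟩ := hD.exists_stopping_balls hg hg0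
    (by positivity : 0 < s / 8) (by positivity : 0 ≤ t)
    (fun x hx => hosc.setAverage_indicator_abs_sub_le hD hf hs hU hx.1) hE
  have hpiece : ∀ b ∈ u,
      μ (E ∩ ball b (6 * ρ b)) ≤ M * ENNReal.ofReal (cD ^ 3) * μ (ball b (ρ b)) := by
    intro b hb
    obtain ⟨hρ0, hρs, -, hstop⟩ := hρ b hb
    have hby : dist b y < s := (huE hb).1
    have h2 : ball b (2 * ρ b) ⊆ ball y (2 * s) := ball_subset_ball' (by linarith)
    rw [setAverage_congr_fun measurableSet_ball
      (Eventually.of_forall fun z hz => indicator_of_mem (h2 hz) _)] at hstop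
    exact hosc.measure_inter_ball_le hD hf hs hU (huE hb).1 hρ0 (by linarith) hstop
      (hM b _ (by positivity) ((ball_subset_ball' (by linarith)).trans hU))
  have hsum : ∑' b : u, μ (ball b (ρ b)) ≤ ENNReal.ofReal ((∫ z, g z ∂μ) / t) :=
    tsum_measure_le_ofReal_integral_div hu (fun _ _ => measurableSet_ball) hdisj
      (fun b hb => hD.measure_ball_ne_top b (hρ b hb).1) hg hg0 (by positivity)
      fun b hb => (hρ b hb).2.2.1
  have harith : cD ^ 3 * ((∫ z, g z ∂μ) / t) ≤ μ.real (ball y s) / 2 := by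
    have hg_int : ∫ z, g z ∂μ ≤ (1 + cD) * N * (cD * μ.real (ball y s)) :=
      (hosc.integral_indicator_abs_sub_le hD hf hs hU).trans (by
        gcongr; simpa using hD.measureReal_ball_le_pow_mul y hs (k := 1) (by linarith))
    have hc : 0 ≤ 2 * cD ^ 4 * ((2 * cD + 1) * (cD - 1)) :=
      mul_nonneg (by positivity) (mul_nonneg (by linarith) (by linarith))
    rw [mul_div_assoc', div_le_div_iff₀ (by positivity) two_pos]
    calc cD ^ 3 * (∫ z, g z ∂μ) * 2
        ≤ cD ^ 3 * ((1 + cD) * N * (cD * μ.real (ball y s))) * 2 := by gcongr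
      _ = 2 * (1 + cD) * cD ^ 4 * (N * μ.real (ball y s)) := by ring
      _ ≤ 4 * cD ^ 6 * (N * μ.real (ball y s)) :=
          mul_le_mul_of_nonneg_right (by nlinarith) (by positivity)
      _ = μ.real (ball y s) * t := by ring
  calc μ E ≤ M * ENNReal.ofReal (cD ^ 3) * ∑' b : u, μ (ball b (ρ b)) :=
        measure_le_mul_tsum_of_measure_sdiff_biUnion_eq_zero hu hnull hpiece
    _ ≤ M * ENNReal.ofReal (cD ^ 3 * ((∫ z, g z ∂μ) / t)) := by
        rw [mul_assoc, ENNReal.ofReal_mul (by positivity)]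
        gcongr
    _ ≤ M * ENNReal.ofReal (μ.real (ball y s) / 2) := by gcongr
    _ = M / 2 * μ (ball y s) := by
        rw [ENNReal.ofReal_div_of_pos two_pos, ofReal_measureReal (hD.measure_ball_ne_top y hs),
          ENNReal.ofReal_ofNat, ← mul_div_assoc, ENNReal.mul_div_right_comm]

lemma measure_lt_abs_sub_setAverage_le (hN : 0 < N) (n : ℕ) {y : X} {s : ℝ} (hs : 0 < s)
    (hU : ball y (2 * s) ⊆ U) :
    μ {z ∈ ball y s | n * (5 * cD ^ 7 * N) < |f z - ⨍ w in ball y s, f w ∂μ|}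
      ≤ 2⁻¹ ^ n * μ (ball y s) := by
  induction n generalizing y s with
  | zero =>
    rw [Nat.cast_zero, zero_mul, pow_zero, one_mul]
    exact measure_mono (sep_subset _ _)
  | succ n ih =>
    have hc : 0 ≤ n * (5 * cD ^ 7 * N) := by have := hD.pos; positivity
    rw [Nat.cast_succ, add_one_mul, pow_succ (2⁻¹ : ℝ≥0∞) n, ← div_eq_mul_inv]
    exact hosc.measure_lt_abs_sub_setAverage_add_le hD hf hN hc (fun b ρ hρ hb => ih hρ hb) hs hU

end MeanOscBoundedOn

end MeanOscillation

lemma inv_two_pow_floor_le_ofReal_two_mul_exp (τ : ℝ) :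
    (2⁻¹ : ℝ≥0∞) ^ ⌊τ⌋₊ ≤ ENNReal.ofReal (2 * Real.exp (-(Real.log 2 * τ))) := by
  have h : (2⁻¹ : ℝ) ^ ((⌊τ⌋₊ + 1 : ℕ) : ℝ) ≤ 2⁻¹ ^ τ :=
    Real.rpow_le_rpow_of_exponent_ge (by norm_num) (by norm_num) (by
      push_cast; exact (Nat.lt_floor_add_one τ).le)
  rw [Real.rpow_natCast, pow_succ, Real.rpow_def_of_pos (by norm_num), Real.log_inv, neg_mul]
    at h
  rw [← ENNReal.ofReal_ofNat 2, ← ENNReal.ofReal_inv_of_pos two_pos,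
    ← ENNReal.ofReal_pow (by norm_num)]
  exact ENNReal.ofReal_le_ofReal (by linarith)

/-- John–Nirenberg lemma, Lemma 2.4: there is a constant `A > 0`,
depending only on `c_D`, such that for every ball `B` and every `f ∈ BMO(5B)`,
`μ({x ∈ B : |f − f_B| > λ}) ≤ 2 μ(B) exp(−Aλ/‖f‖_*)` for all `λ > 0`. -/
theorem john_nirenberg (cD : ℝ) (hcD : 1 < cD) :
    ∃ A : ℝ, 0 < A ∧
      ∀ (X : Type) [MetricSpace X] [CompleteSpace X] [MeasurableSpace X] [BorelSpace X]
        (μ : Measure X), IsDoublingWith μ cD →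
      ∀ (x : X) (r : ℝ), 0 < r →
      ∀ f : X → ℝ, IntegrableOn f (ball x (5 * r)) μ →
      BddAbove {a | ∃ y s, 0 < s ∧ ball y s ⊆ ball x (5 * r) ∧ a = avgOsc μ f y s} →
      ∀ lam : ℝ, 0 < lam →
        μ {y ∈ ball x r | lam < |f y - ⨍ z in ball x r, f z ∂μ|} ≤
          ENNReal.ofReal (2 * Real.exp (-A * lam / bmoNormIn μ f (ball x (5 * r)))) *
            μ (ball x r) := by
  have hcD₀ : 0 < cD := zero_lt_one.trans hcD
  refine ⟨Real.log 2 / (5 * cD ^ 7), by positivity, ?_⟩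
  intro X _ _ _ _ μ hD x r hr f hf hbdd lam hlam
  have hA : 0 < Real.log 2 / (5 * cD ^ 7) := by positivity
  set A := Real.log 2 / (5 * cD ^ 7) with hA_def
  set N := bmoNormIn μ f (ball x (5 * r))
  rcases le_or_gt N 0 with hN | hN
  · -- Then the exponent is nonnegative (when `N = 0`, because `a / 0 = 0`).
    have hexp : 0 ≤ -A * lam / N := div_nonneg_of_nonpos (by nlinarith) hN
    refine (measure_mono (sep_subset _ _)).trans (le_mul_of_one_le_left' ?_)
    rw [← ENNReal.ofReal_one]
    exact ENNReal.ofReal_le_ofReal (by linarith [Real.add_one_le_exp (-A * lam / N)])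
  have hosc : MeanOscBoundedOn μ f (ball x (5 * r)) N :=
    fun y s hs hys => le_csSup hbdd ⟨y, s, hs, hys, rfl⟩
  set n := ⌊lam / (5 * cD ^ 7 * N)⌋₊
  have hn : n * (5 * cD ^ 7 * N) ≤ lam :=
    (le_div_iff₀ (by positivity)).1 (Nat.floor_le (by positivity))
  calc μ {y ∈ ball x r | lam < |f y - ⨍ z in ball x r, f z ∂μ|}
      ≤ μ {y ∈ ball x r | n * (5 * cD ^ 7 * N) < |f y - ⨍ z in ball x r, f z ∂μ|} :=
        measure_mono fun z hz => ⟨hz.1, hn.trans_lt hz.2⟩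
    _ ≤ 2⁻¹ ^ n * μ (ball x r) :=
        hosc.measure_lt_abs_sub_setAverage_le hD hf hN n hr (ball_subset_ball (by linarith))
    _ ≤ _ := by
        have hexp : -A * lam / N = -(Real.log 2 * (lam / (5 * cD ^ 7 * N))) := by
          rw [hA_def]; field_simp
        rw [hexp]
        gcongr
        exact inv_two_pow_floor_le_ofReal_two_mul_exp _
end

section
/- Let f : X → ℝ be μ-measurable with |f| < ∞ μ-almost everywhere in X. Assume there exist positive constants C₁, C₂ such that for every ball B ⊂ X and every pair of real numbers −∞ < s ≤ t < ∞, min{ μ({x ∈ B : f(x) ≥ t}), μ({x ∈ B : f(x) ≤ s}) } ≤ C₁ μ(B) exp(−C₂ (t − s)). Then f ∈ BMO(X) and ‖f‖_* ≤ 4 (C₁ + 1) C₂⁻¹ exp(2 C₂). -/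
/-!
On a ball `B`, take a level `m` such that `{f ≥ m - 1}` and `{f ≤ m + 1}` each carry at least
half of `μ B`. In the hypothesis with `s = m + 1 ≤ t = m + λ` the minimum is either
`μ {f ≥ m + λ}` or at least `μ B / 2`; either way `μ {f ≥ m + λ} ≤ 2 C₁ e^{-C₂(λ-1)} μ B`, and
symmetrically below `m`. The layer cake formula turns this exponential tail of `|f - m|` into a
bound for `⨍_B |f - m|`, and `⨍_B |f - f_B|` is at most twice that.
-/

open MeasureTheory Metric ENNReal

open Set Filter Topology

lemma le_two_mul_mul_of_min_le {a b c M : ℝ≥0∞} (ha : a ≤ M) (hb : M / 2 ≤ b)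
    (h : min a b ≤ c * M) : a ≤ 2 * c * M := by
  rw [mul_assoc]
  rcases min_le_iff.1 h with h | h
  · exact h.trans (le_mul_of_one_le_left' one_le_two)
  · calc a ≤ M := ha
      _ = 2 * (M / 2) := (ENNReal.mul_div_cancel two_ne_zero ofNat_ne_top).symm
      _ ≤ 2 * (c * M) := by gcongr; exact hb.trans h

section ExpTail

variable {α : Type*} [MeasurableSpace α] {ν : Measure α} {f : α → ℝ}

lemma tendsto_measure_setOf_ge_atBot (hf : Measurable f) :
    Tendsto (fun s => ν {x | s ≤ f x}) atBot (𝓝 (ν univ)) := by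
  have h := tendsto_measure_Ici_atBot (ν.map f)
  rw [Measure.map_apply hf MeasurableSet.univ, preimage_univ] at h
  exact h.congr fun s => Measure.map_apply hf measurableSet_Ici

lemma tendsto_measure_setOf_ge_atTop [IsFiniteMeasure ν] (hf : Measurable f) :
    Tendsto (fun s => ν {x | s ≤ f x}) atTop (𝓝 0) := by
  have hempty : (⋂ s : ℝ, {x | s ≤ f x}) = ∅ :=
    eq_empty_of_forall_notMem fun x hx =>
      (lt_add_one (f x)).not_ge (mem_iInter.1 hx (f x + 1))
  simpa [hempty, Function.comp_def] using tendsto_measure_iInter_atTop (μ := ν)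
    (fun s => (measurableSet_le measurable_const hf).nullMeasurableSet)
    (fun s t hst x (hx : t ≤ f x) => hst.trans hx) ⟨0, measure_ne_top ν _⟩

lemma exists_half_le_measure_setOf_ge_and_le [IsFiniteMeasure ν] (hf : Measurable f) :
    ∃ m : ℝ, (∀ s < m, ν univ / 2 ≤ ν {x | s ≤ f x}) ∧
      ∀ s, m < s → ν univ / 2 ≤ ν {x | f x ≤ s} := by
  rcases eq_or_ne ν 0 with rfl | hν
  · exact ⟨0, by simp⟩
  have hhalf : ν univ / 2 < ν univ :=
    ENNReal.half_lt_self (Measure.measure_univ_ne_zero.2 hν) (measure_ne_top ν _)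
  set A := {s : ℝ | ν univ / 2 ≤ ν {x | s ≤ f x}}
  have hanti : ∀ {s t}, s ≤ t → ν {x | t ≤ f x} ≤ ν {x | s ≤ f x} := fun hst =>
    measure_mono fun x (hx : _ ≤ f x) => hst.trans hx
  obtain ⟨s₀, hs₀⟩ :=
    ((tendsto_measure_setOf_ge_atBot hf).eventually (lt_mem_nhds hhalf)).exists
  obtain ⟨N, hN⟩ := ((tendsto_measure_setOf_ge_atTop (ν := ν) hf).eventually
    (gt_mem_nhds (ENNReal.half_pos (Measure.measure_univ_ne_zero.2 hν)))).exists
  have hbdd : BddAbove A := ⟨N, fun s hs => le_of_not_gt fun hNs =>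
    (hs.trans (hanti hNs.le)).not_gt hN⟩
  refine ⟨sSup A, fun s hs => ?_, fun s hs => ?_⟩
  · obtain ⟨a, ha, hsa⟩ := exists_lt_of_lt_csSup ⟨s₀, hs₀.le⟩ hs
    exact ha.trans (hanti hsa.le)
  · have hsA : ν {x | s ≤ f x} < ν univ / 2 := not_le.1 fun h => (le_csSup hbdd h).not_gt hs
    by_contra! hlt
    have hcover : univ ⊆ {x | f x ≤ s} ∪ {x | s ≤ f x} := fun x _ => le_total (f x) s
    have := (measure_mono (μ := ν) hcover).trans (measure_union_le _ _)
    exact (this.trans_lt (ENNReal.add_lt_add hlt hsA)).ne (ENNReal.add_halves _).symm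

lemma measure_setOf_le_abs_sub_le {C₁ C₂ m : ℝ}
    (h : ∀ s t : ℝ, s ≤ t → min (ν {x | t ≤ f x}) (ν {x | f x ≤ s}) ≤
      ENNReal.ofReal (C₁ * Real.exp (-C₂ * (t - s))) * ν univ)
    (hlow : ∀ s < m, ν univ / 2 ≤ ν {x | s ≤ f x})
    (hup : ∀ s, m < s → ν univ / 2 ≤ ν {x | f x ≤ s}) {t : ℝ} (ht : 1 ≤ t) :
    ν {x | t ≤ |f x - m|} ≤
      ENNReal.ofReal (4 * C₁ * Real.exp C₂ * Real.exp (-C₂ * t)) * ν univ := by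
  set E := ENNReal.ofReal (C₁ * Real.exp (-C₂ * (t - 1)))
  have hupper : ν {x | m + t ≤ f x} ≤ 2 * E * ν univ := by
    have := h (m + 1) (m + t) (by linarith)
    rw [show m + t - (m + 1) = t - 1 by ring] at this
    exact le_two_mul_mul_of_min_le (measure_mono (subset_univ _)) (hup _ (by linarith)) this
  have hlower : ν {x | f x ≤ m - t} ≤ 2 * E * ν univ := by
    have := h (m - t) (m - 1) (by linarith)
    rw [show m - 1 - (m - t) = t - 1 by ring, min_comm] at this
    exact le_two_mul_mul_of_min_le (measure_mono (subset_univ _)) (hlow _ (by linarith)) this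
  have hsplit : {x | t ≤ |f x - m|} ⊆ {x | m + t ≤ f x} ∪ {x | f x ≤ m - t} :=
    fun x (hx : t ≤ |f x - m|) => by
      rcases le_abs'.1 hx with hx | hx
      · exact Or.inr (show f x ≤ m - t by linarith)
      · exact Or.inl (show m + t ≤ f x by linarith)
  have hE : ENNReal.ofReal (4 * C₁ * Real.exp C₂ * Real.exp (-C₂ * t)) = 4 * E := by
    rw [← ENNReal.ofReal_ofNat 4, ← ENNReal.ofReal_mul (by norm_num), mul_assoc, mul_assoc,
      ← Real.exp_add]
    ring_nf
  calc ν {x | t ≤ |f x - m|} ≤ ν {x | m + t ≤ f x} + ν {x | f x ≤ m - t} :=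
        (measure_mono hsplit).trans (measure_union_le _ _)
    _ ≤ 2 * E * ν univ + 2 * E * ν univ := add_le_add hupper hlower
    _ = _ := by rw [hE]; ring

end ExpTail

lemma lintegral_ofReal_mul_exp_neg_mul_Ioi {K : ℝ} (hK : 0 ≤ K) (a : ℝ) {c : ℝ} (hc : 0 < c) :
    ∫⁻ t in Ioi a, ENNReal.ofReal (K * Real.exp (-c * t)) =
      ENNReal.ofReal (K * Real.exp (-c * a) / c) := by
  have hint : IntegrableOn (fun t => K * Real.exp (-c * t)) (Ioi a) :=
    (exp_neg_integrableOn_Ioi a hc).const_mul K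
  rw [← ofReal_integral_eq_lintegral_ofReal hint (ae_of_all _ fun t => by positivity),
    integral_const_mul, integral_exp_mul_Ioi (neg_neg_of_pos hc), neg_div_neg_eq, mul_div_assoc]

section Oscillation

variable {α : Type*} [MeasurableSpace α] {ν : Measure α}

lemma lintegral_ofReal_le_of_measure_le_exp {g : α → ℝ} (hg₀ : 0 ≤ g) (hg : Measurable g)
    {a c K : ℝ} (ha : 0 ≤ a) (hc : 0 < c) (hK : 0 ≤ K)
    (htail : ∀ t, a ≤ t → ν {x | t ≤ g x} ≤ ENNReal.ofReal (K * Real.exp (-c * t)) * ν univ) :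
    ∫⁻ x, ENNReal.ofReal (g x) ∂ν ≤ ENNReal.ofReal (a + K * Real.exp (-c * a) / c) * ν univ := by
  rw [lintegral_eq_lintegral_meas_le ν (ae_of_all _ hg₀) hg.aemeasurable,
    ← Ioc_union_Ioi_eq_Ioi ha, lintegral_union measurableSet_Ioi Ioc_disjoint_Ioi_same,
    ENNReal.ofReal_add ha (by positivity), add_mul]
  gcongr
  · calc ∫⁻ t in Ioc 0 a, ν {x | t ≤ g x} ≤ ∫⁻ t in Ioc 0 a, ν univ :=
          lintegral_mono fun t => measure_mono (subset_univ _)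
      _ = ENNReal.ofReal a * ν univ := by
          rw [setLIntegral_const, Real.volume_Ioc, sub_zero, mul_comm]
  · calc ∫⁻ t in Ioi a, ν {x | t ≤ g x}
        ≤ ∫⁻ t in Ioi a, ENNReal.ofReal (K * Real.exp (-c * t)) * ν univ :=
          setLIntegral_mono' measurableSet_Ioi fun t ht => htail t (le_of_lt ht)
      _ = ENNReal.ofReal (K * Real.exp (-c * a) / c) * ν univ := by
          rw [lintegral_mul_const _ (by fun_prop), lintegral_ofReal_mul_exp_neg_mul_Ioi hK a hc]

lemma integrable_and_average_le_of_lintegral_le [IsFiniteMeasure ν] {g : α → ℝ} (hg₀ : 0 ≤ g)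
    (hg : Measurable g) {S : ℝ} (hS : 0 ≤ S)
    (h : ∫⁻ x, ENNReal.ofReal (g x) ∂ν ≤ ENNReal.ofReal S * ν univ) :
    Integrable g ν ∧ ⨍ x, g x ∂ν ≤ S := by
  have hint : Integrable g ν := ⟨hg.aestronglyMeasurable,
    (hasFiniteIntegral_iff_ofReal (ae_of_all _ hg₀)).2
      (h.trans_lt (mul_lt_top ofReal_lt_top (measure_lt_top _ _)))⟩
  refine ⟨hint, (ENNReal.ofReal_le_ofReal_iff hS).1 ?_⟩
  rw [ofReal_average hint (ae_of_all _ hg₀)]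
  exact ENNReal.div_le_of_le_mul h

lemma integral_abs_sub_integral_le [IsProbabilityMeasure ν] {f : α → ℝ} (hf : Integrable f ν)
    (m : ℝ) : ∫ x, |f x - ∫ y, f y ∂ν| ∂ν ≤ 2 * ∫ x, |f x - m| ∂ν := by
  have hfm : Integrable (fun x => |f x - m|) ν := (hf.sub (integrable_const m)).abs
  have hmean : |∫ y, f y ∂ν - m| ≤ ∫ x, |f x - m| ∂ν :=
    calc |∫ y, f y ∂ν - m| = |∫ y, (f y - m) ∂ν| := by
          rw [integral_sub hf (integrable_const m), integral_const, probReal_univ, one_smul]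
      _ ≤ ∫ x, |f x - m| ∂ν := by
          simpa only [Real.norm_eq_abs] using norm_integral_le_integral_norm (fun y => f y - m)
  calc ∫ x, |f x - ∫ y, f y ∂ν| ∂ν ≤ ∫ x, (|f x - m| + |∫ y, f y ∂ν - m|) ∂ν :=
        integral_mono ((hf.sub (integrable_const _)).abs) (hfm.add (integrable_const _))
          fun x => (abs_sub_le _ m _).trans_eq (by rw [abs_sub_comm m])
    _ = ∫ x, |f x - m| ∂ν + |∫ y, f y ∂ν - m| := by
        rw [integral_add hfm (integrable_const _), integral_const, probReal_univ, one_smul]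
    _ ≤ 2 * ∫ x, |f x - m| ∂ν := by linarith

lemma average_abs_sub_average_le [IsFiniteMeasure ν] {f : α → ℝ} (hf : Integrable f ν) (m : ℝ) :
    ⨍ x, |f x - ⨍ y, f y ∂ν| ∂ν ≤ 2 * ⨍ x, |f x - m| ∂ν := by
  rcases eq_zero_or_neZero ν with rfl | _
  · simp
  simp only [average_eq']
  exact integral_abs_sub_integral_le
    (hf.smul_measure (ENNReal.inv_ne_top.2 (Measure.measure_univ_ne_zero.2 (NeZero.ne ν)))) m

lemma integrable_and_average_abs_sub_average_le_of_min_le [IsFiniteMeasure ν] {f : α → ℝ}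
    (hf : Measurable f) {C₁ C₂ : ℝ} (hC₁ : 0 ≤ C₁) (hC₂ : 0 < C₂)
    (h : ∀ s t : ℝ, s ≤ t → min (ν {x | t ≤ f x}) (ν {x | f x ≤ s}) ≤
      ENNReal.ofReal (C₁ * Real.exp (-C₂ * (t - s))) * ν univ) :
    Integrable f ν ∧ ⨍ x, |f x - ⨍ y, f y ∂ν| ∂ν ≤ 2 + 4 * (C₁ + 1) / C₂ := by
  obtain ⟨m, hlow, hup⟩ := exists_half_le_measure_setOf_ge_and_le (ν := ν) hf
  have hconst : 1 + 2 / C₂ + 4 * C₁ * Real.exp C₂ * Real.exp (-C₂ * (1 + 2 / C₂)) / C₂ ≤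
      1 + 2 * (C₁ + 1) / C₂ := by
    have hexp : Real.exp C₂ * Real.exp (-C₂ * (1 + 2 / C₂)) = Real.exp (-2) := by
      rw [← Real.exp_add]; congr 1; field_simp; ring
    have hhalf : Real.exp (-2) ≤ 1 / 2 := by
      rw [Real.exp_neg, inv_le_comm₀ (Real.exp_pos 2) (by norm_num)]
      linarith [Real.add_one_le_exp 2]
    have : 4 * C₁ * Real.exp C₂ * Real.exp (-C₂ * (1 + 2 / C₂)) ≤ 2 * C₁ := by
      rw [mul_assoc, hexp]; nlinarith
    calc _ ≤ 1 + 2 / C₂ + 2 * C₁ / C₂ := by gcongr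
      _ = _ := by ring
  have hlint : ∫⁻ x, ENNReal.ofReal |f x - m| ∂ν ≤
      ENNReal.ofReal (1 + 2 * (C₁ + 1) / C₂) * ν univ := by
    refine (lintegral_ofReal_le_of_measure_le_exp (g := fun x => |f x - m|) (a := 1 + 2 / C₂)
      (fun x => abs_nonneg _) (hf.sub_const m).abs (by positivity) hC₂ (by positivity)
      fun t ht => measure_setOf_le_abs_sub_le h hlow hup ?_).trans ?_
    · linarith [div_pos two_pos hC₂]
    · exact mul_le_mul_left (ENNReal.ofReal_le_ofReal hconst) _
  obtain ⟨habs, havg⟩ := integrable_and_average_le_of_lintegral_le (fun x => abs_nonneg _)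
    (hf.sub_const m).abs (by positivity) hlint
  have hfm : Integrable (fun x => f x - m) ν :=
    (integrable_norm_iff (hf.sub_const m).aestronglyMeasurable).1 habs
  have hfint : Integrable f ν :=
    (hfm.add (integrable_const m)).congr (ae_of_all _ fun x => sub_add_cancel (f x) m)
  exact ⟨hfint, (average_abs_sub_average_le hfint m).trans
    ((mul_le_mul_of_nonneg_left havg zero_le_two).trans_eq (by ring))⟩

end Oscillation

lemma memBMO_and_bmoNorm_le_of_forall_ball {X : Type*} [MetricSpace X] [MeasurableSpace X]
    {μ : Measure X} {f : X → ℝ} {M : ℝ} (hM : 0 ≤ M)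
    (h : ∀ (x : X) (r : ℝ), 0 < r → IntegrableOn f (ball x r) μ ∧ avgOsc μ f x r ≤ M) :
    MemBMO μ f ∧ bmoNorm μ f ≤ M := by
  have hbound : ∀ a ∈ bmoSet μ f, a ≤ M := by
    rintro a ⟨x, r, hr, rfl⟩
    exact (h x r hr).2
  exact ⟨⟨fun x => ⟨ball x 1, ball_mem_nhds x one_pos, (h x 1 one_pos).1⟩, M, hbound⟩,
    Real.sSup_le hbound hM⟩

lemma two_add_div_le_mul_exp {C₁ C₂ : ℝ} (hC₁ : 0 ≤ C₁) (hC₂ : 0 < C₂) :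
    2 + 4 * (C₁ + 1) / C₂ ≤ 4 * (C₁ + 1) * C₂⁻¹ * Real.exp (2 * C₂) := by
  calc 2 + 4 * (C₁ + 1) / C₂ ≤ 4 * (C₁ + 1) / C₂ + 8 * (C₁ + 1) := by linarith
    _ = 4 * (C₁ + 1) * C₂⁻¹ * (2 * C₂ + 1) := by field_simp; ring
    _ ≤ 4 * (C₁ + 1) * C₂⁻¹ * Real.exp (2 * C₂) := by
        gcongr; exact Real.add_one_le_exp _

theorem two_sided_jn_converse_general {X : Type*} [MetricSpace X]
    [MeasurableSpace X] (μ : Measure X) (cD : ℝ)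
    (hμ : IsDoublingWith μ cD) (f : X → ℝ) (hf : Measurable f)
    (C₁ C₂ : ℝ) (hC₁ : 0 < C₁) (hC₂ : 0 < C₂)
    (h : ∀ (x : X) (r : ℝ), 0 < r → ∀ s t : ℝ, s ≤ t →
      min (μ {y ∈ ball x r | t ≤ f y}) (μ {y ∈ ball x r | f y ≤ s}) ≤
        ENNReal.ofReal (C₁ * Real.exp (-C₂ * (t - s))) * μ (ball x r)) :
    MemBMO μ f ∧ bmoNorm μ f ≤ 4 * (C₁ + 1) * C₂⁻¹ * Real.exp (2 * C₂) := by
  refine memBMO_and_bmoNorm_le_of_forall_ball (by positivity) fun x r hr => ?_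
  have : IsFiniteMeasure (μ.restrict (ball x r)) :=
    isFiniteMeasure_restrict.2 (hμ.2.1 x r hr).2.ne
  obtain ⟨hint, hosc⟩ :=
    integrable_and_average_abs_sub_average_le_of_min_le hf hC₁.le hC₂ fun s t hst => by
      rw [Measure.restrict_apply (measurableSet_le measurable_const hf),
        Measure.restrict_apply (measurableSet_le hf measurable_const),
        Measure.restrict_apply_univ, inter_comm, inter_comm {y | f y ≤ s}]
      exact h x r hr s t hst
  exact ⟨hint, hosc.trans (two_add_div_le_mul_exp hC₁.le hC₂)⟩

/-- Lemma 3.6: the converse of the two-sided John–Nirenberg estimate. -/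
theorem two_sided_jn_converse {X : Type*} [MetricSpace X] [CompleteSpace X]
    [MeasurableSpace X] [BorelSpace X] (μ : Measure X) (cD : ℝ)
    (hμ : IsDoublingWith μ cD) (f : X → ℝ) (hf : Measurable f)
    (C₁ C₂ : ℝ) (hC₁ : 0 < C₁) (hC₂ : 0 < C₂)
    (h : ∀ (x : X) (r : ℝ), 0 < r → ∀ s t : ℝ, s ≤ t →
      min (μ {y ∈ ball x r | t ≤ f y}) (μ {y ∈ ball x r | f y ≤ s}) ≤
        ENNReal.ofReal (C₁ * Real.exp (-C₂ * (t - s))) * μ (ball x r)) :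
    MemBMO μ f ∧ bmoNorm μ f ≤ 4 * (C₁ + 1) * C₂⁻¹ * Real.exp (2 * C₂) :=
  two_sided_jn_converse_general μ cD hμ f hf C₁ C₂ hC₁ hC₂ h
end

section
/- Let λ : ℝ → [0,1] be a non-constant, non-decreasing function, and assume there exist positive constants C₁, C₂ such that min{λ(s), 1 − λ(t)} ≤ C₁ exp(−C₂ (t − s)) for every pair of real numbers −∞ < s ≤ t < ∞. Then there exists t₀ ∈ ℝ such that max{λ(t₀ − t), 1 − λ(t₀ + t)} ≤ (C₁ + 1) exp(2 C₂) exp(−C₂ t) for every t ≥ 0. -/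
/-!
Let `t₀` be the point where `λ` crosses `1/2`. For `t ≥ 1`, apply the hypothesis to the pair
`(t₀ - t, t₀ - 1)`: there `1 - λ(t₀ - 1) ≥ 1/2 > λ(t₀ - t)`, so the minimum is `λ(t₀ - t)` and it is
at most `C₁ exp(-C₂ (t - 1))`; the pair `(t₀ + 1, t₀ + t)` bounds `1 - λ(t₀ + t)` in the same way.
For `t < 1` the right-hand side is at least `1`. The crossing point exists because the hypothesis
forces `λ` to tend to `0` at `-∞` and to `1` at `+∞` as soon as `0 < λ(b)` and `λ(a) < 1`.
-/

open Filter Topology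

theorem Monotone.exists_lt_and_le_of_lt_of_le {α β : Type*} [ConditionallyCompleteLinearOrder α]
    [LinearOrder β] {f : α → β} (hf : Monotone f) {c : β} (hlo : ∃ x, f x < c)
    (hhi : ∃ y, c ≤ f y) : ∃ t₀, (∀ x < t₀, f x < c) ∧ ∀ x, t₀ < x → c ≤ f x := by
  obtain ⟨y, hy⟩ := hhi
  have hbdd : BddAbove {x | f x < c} :=
    ⟨y, fun x hx => le_of_not_gt fun hyx => (hy.trans (hf hyx.le)).not_gt hx⟩
  refine ⟨sSup {x | f x < c}, fun x hx => ?_, fun x hx => ?_⟩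
  · obtain ⟨z, hz, hxz⟩ := exists_lt_of_lt_csSup hlo hx
    exact (hf hxz.le).trans_lt hz
  · exact le_of_not_gt fun hxc => (le_csSup hbdd hxc).not_gt hx

theorem exists_lt_of_min_le_of_tendsto_zero {l g : ℝ → ℝ} (hg : Tendsto g atTop (𝓝 0))
    (h : ∀ s t, s ≤ t → min (l s) (1 - l t) ≤ g (t - s)) {a : ℝ} (ha : l a < 1)
    {c : ℝ} (hc : 0 < c) :
    ∃ s, l s < c := by
  have hε : 0 < min c (1 - l a) := lt_min hc (by linarith)
  obtain ⟨d₀, hd₀⟩ := eventually_atTop.mp (hg.eventually_lt_const hε)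
  refine ⟨a - max d₀ 0, ?_⟩
  have hmin := (h _ a (by linarith [le_max_right d₀ 0])).trans_lt
    (hd₀ (a - (a - max d₀ 0)) (by linarith [le_max_left d₀ 0]))
  rcases min_lt_iff.mp hmin with hs | ha'
  · linarith [min_le_left c (1 - l a)]
  · linarith [min_le_right c (1 - l a)]

theorem exists_le_of_min_le_of_tendsto_zero {l g : ℝ → ℝ} (hg : Tendsto g atTop (𝓝 0))
    (h : ∀ s t, s ≤ t → min (l s) (1 - l t) ≤ g (t - s)) {b : ℝ} (hb : 0 < l b)
    {c : ℝ} (hc : c < 1) :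
    ∃ t, c ≤ l t := by
  have hε : 0 < min (1 - c) (l b) := lt_min (by linarith) hb
  obtain ⟨d₀, hd₀⟩ := eventually_atTop.mp (hg.eventually_lt_const hε)
  refine ⟨b + max d₀ 0, ?_⟩
  have hmin := (h b _ (by linarith [le_max_right d₀ 0])).trans_lt
    (hd₀ (b + max d₀ 0 - b) (by linarith [le_max_left d₀ 0]))
  rcases min_lt_iff.mp hmin with hb' | ht
  · linarith [min_le_right (1 - c) (l b)]
  · linarith [min_le_left (1 - c) (l b)]

theorem max_le_of_min_le_of_crossing {l g : ℝ → ℝ}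
    (h : ∀ s t, s ≤ t → min (l s) (1 - l t) ≤ g (t - s)) {t₀ : ℝ}
    (hbelow : ∀ x < t₀, l x < 1 / 2) (habove : ∀ x, t₀ < x → 1 / 2 ≤ l x)
    {t : ℝ} (ht : 1 ≤ t) :
    max (l (t₀ - t)) (1 - l (t₀ + t)) ≤ g (t - 1) := by
  have hleft := hbelow (t₀ - t) (by linarith)
  have hright := habove (t₀ + t) (by linarith)
  refine max_le ?_ ?_
  · have hmin := h (t₀ - t) (t₀ - 1) (by linarith)
    rwa [min_eq_left (by linarith [hbelow (t₀ - 1) (by linarith)]),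
      show t₀ - 1 - (t₀ - t) = t - 1 by ring] at hmin
  · have hmin := h (t₀ + 1) (t₀ + t) (by linarith)
    rwa [min_eq_right (by linarith [habove (t₀ + 1) (by linarith)]),
      show t₀ + t - (t₀ + 1) = t - 1 by ring] at hmin

theorem tendsto_const_mul_exp_neg_mul_atTop {C₁ C₂ : ℝ} (hC₂ : 0 < C₂) :
    Tendsto (fun d => C₁ * Real.exp (-C₂ * d)) atTop (𝓝 0) := by
  have hexp : Tendsto (fun d => Real.exp (-(C₂ * d))) atTop (𝓝 0) :=
    Real.tendsto_exp_neg_atTop_nhds_zero.comp (tendsto_id.const_mul_atTop hC₂)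
  simpa [neg_mul] using hexp.const_mul C₁

theorem const_mul_exp_neg_mul_sub_one_le {C₁ C₂ : ℝ} (hC₁ : 0 ≤ C₁) (hC₂ : 0 ≤ C₂) (t : ℝ) :
    C₁ * Real.exp (-C₂ * (t - 1)) ≤ (C₁ + 1) * Real.exp (2 * C₂) * Real.exp (-C₂ * t) := by
  rw [mul_assoc, ← Real.exp_add]
  gcongr <;> linarith

theorem one_le_mul_exp_two_mul_exp_neg_mul {C₁ C₂ : ℝ} (hC₁ : 0 ≤ C₁) (hC₂ : 0 ≤ C₂) {t : ℝ}
    (ht : t ≤ 2) : 1 ≤ (C₁ + 1) * Real.exp (2 * C₂) * Real.exp (-C₂ * t) := by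
  rw [mul_assoc, ← Real.exp_add]
  exact one_le_mul_of_one_le_of_one_le (by linarith) (Real.one_le_exp (by nlinarith))

theorem gotoh_monotone_lemma_general (l : ℝ → ℝ) (hrange : ∀ t, l t ∈ Set.Icc (0 : ℝ) 1)
    (hmono : Monotone l) (hnonconst : ∃ s t : ℝ, l s ≠ l t)
    (C₁ C₂ : ℝ) (hC₂ : 0 < C₂)
    (h : ∀ s t : ℝ, s ≤ t → min (l s) (1 - l t) ≤ C₁ * Real.exp (-C₂ * (t - s))) :
    ∃ t₀ : ℝ, ∀ t : ℝ, 0 ≤ t →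
      max (l (t₀ - t)) (1 - l (t₀ + t)) ≤
        (C₁ + 1) * Real.exp (2 * C₂) * Real.exp (-C₂ * t) := by
  obtain ⟨a, b, hab⟩ : ∃ a b, l a < l b := by
    obtain ⟨s, t, hst⟩ := hnonconst
    rcases hst.lt_or_gt with hlt | hgt
    exacts [⟨s, t, hlt⟩, ⟨t, s, hgt⟩]
  have hC₁ : 0 ≤ C₁ := by
    simpa using (le_min (hrange 0).1 (sub_nonneg.mpr (hrange 0).2)).trans (h 0 0 le_rfl)
  have hg := tendsto_const_mul_exp_neg_mul_atTop (C₁ := C₁) hC₂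
  obtain ⟨t₀, hbelow, habove⟩ := hmono.exists_lt_and_le_of_lt_of_le
    (exists_lt_of_min_le_of_tendsto_zero hg h (hab.trans_le (hrange b).2) one_half_pos)
    (exists_le_of_min_le_of_tendsto_zero hg h ((hrange a).1.trans_lt hab) one_half_lt_one)
  refine ⟨t₀, fun t _ => ?_⟩
  rcases lt_or_ge t 1 with ht | ht
  · refine (max_le (hrange _).2 (by linarith [(hrange (t₀ + t)).1])).trans ?_
    exact one_le_mul_exp_two_mul_exp_neg_mul hC₁ hC₂.le (by linarith)
  · calc max (l (t₀ - t)) (1 - l (t₀ + t)) ≤ C₁ * Real.exp (-C₂ * (t - 1)) :=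
          max_le_of_min_le_of_crossing (g := fun d => C₁ * Real.exp (-C₂ * d)) h hbelow habove ht
      _ ≤ _ := const_mul_exp_neg_mul_sub_one_le hC₁ hC₂.le t

/-- Lemma 3.7, Gotoh: a decay estimate for non-constant, non-decreasing
functions `λ : ℝ → [0,1]` satisfying `min{λ(s), 1 − λ(t)} ≤ C₁ exp(−C₂(t−s))`. -/
theorem gotoh_monotone_lemma (l : ℝ → ℝ) (hrange : ∀ t, l t ∈ Set.Icc (0 : ℝ) 1)
    (hmono : Monotone l) (hnonconst : ∃ s t : ℝ, l s ≠ l t)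
    (C₁ C₂ : ℝ) (hC₁ : 0 < C₁) (hC₂ : 0 < C₂)
    (h : ∀ s t : ℝ, s ≤ t → min (l s) (1 - l t) ≤ C₁ * Real.exp (-C₂ * (t - s))) :
    ∃ t₀ : ℝ, ∀ t : ℝ, 0 ≤ t →
      max (l (t₀ - t)) (1 - l (t₀ + t)) ≤
        (C₁ + 1) * Real.exp (2 * C₂) * Real.exp (-C₂ * t) :=
  gotoh_monotone_lemma_general l hrange hmono hnonconst C₁ C₂ hC₂ h
end

section
/- (Strömberg-type lemma) Let f : X → ℝ be μ-measurable and assume there exist constants 0 < γ < (4 c_D³)⁻¹ and λ > 0 such that for every ball B ⊂ X, inf_{c ∈ ℝ} μ({x ∈ B : |f(x) − c| ≥ λ}) ≤ γ μ(B). Then f ∈ BMO(X) and ‖f‖_* ≤ C λ, where C is a positive constant depending only on the doubling constant c_D. -/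
open MeasureTheory Metric ENNReal

/-!
Fix a constant `c x r` for every ball whose `λ`-deviation set has measure at most `g μ(B(x, r))`,
where `γ < g` and `4 c_D³ g ≤ 1`. The core is geometric decay of the deviation sets:
`μ{v ∈ B(y, s/2) : |f v - c y s| ≥ (1 + 2k)λ} ≤ (2 c_D³ g)^k g μ(B(y, s))`.
For the induction step, almost every point `w` of the next level set is a density point of the
`λ`-deviation set `E` of `B(y, s)`. A stopping-time argument gives a radius `t < s/4` such that `E`
fills at least half of `closedBall w t` but less than half of `closedBall w (2t)`; the latter ball
then contains a point where `f` is `λ`-close both to `c y s` and to `c w (8t)`, so the two constants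
differ by less than `2λ` and the induction hypothesis applies in `B(w, 8t)`. A Vitali covering sums
these local bounds against `μ E ≤ g μ(B(y, s))`. Summing over the layers gives
`∫_B |f - c| ≤ 2λ μ(B)`, hence mean oscillation at most `4λ`.
-/

open Set Filter Topology NNReal

theorem Set.exists_mem_two_mul_notMem {S : Set ℝ} (hS : S ⊆ Ioi 0) (hne : S.Nonempty)
    (hbdd : BddAbove S) : ∃ t ∈ S, 2 * t ∉ S := by
  have hsup : 0 < sSup S := (hS hne.some_mem).out.trans_le (le_csSup hbdd hne.some_mem)
  obtain ⟨t, htS, ht⟩ := exists_lt_of_lt_csSup hne (half_lt_self hsup)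
  exact ⟨t, htS, fun h => (le_csSup hbdd h).not_gt (by linarith)⟩

theorem ENNReal.ofReal_le_mul_one_add_tsum {a lam : ℝ} (hlam : 0 < lam) :
    ENNReal.ofReal a ≤ ENNReal.ofReal lam *
      (1 + 2 * ∑' k : ℕ, if (1 + 2 * k) * lam ≤ a then (1 : ℝ≥0∞) else 0) := by
  set n := ⌈(a - lam) / (2 * lam)⌉₊
  have hn : (n : ℝ≥0∞) ≤ ∑' k : ℕ, if (1 + 2 * k) * lam ≤ a then (1 : ℝ≥0∞) else 0 := calc
    (n : ℝ≥0∞)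
        = ∑ k ∈ Finset.range n, if (1 + 2 * k) * lam ≤ a then (1 : ℝ≥0∞) else 0 := by
        rw [Finset.sum_congr rfl fun k hk => if_pos ?_]
        · simp
        have := (lt_div_iff₀ (by positivity)).1 (Nat.lt_ceil.1 (Finset.mem_range.1 hk))
        linarith
    _ ≤ _ := ENNReal.sum_le_tsum _
  have ha : a ≤ lam * (1 + 2 * n) := by
    have := (div_le_iff₀ (by positivity)).1 (Nat.le_ceil ((a - lam) / (2 * lam)))
    linarith
  calc ENNReal.ofReal a ≤ ENNReal.ofReal (lam * (1 + 2 * n)) := ENNReal.ofReal_le_ofReal ha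
    _ = ENNReal.ofReal lam * (1 + 2 * n) := by
        rw [ENNReal.ofReal_mul hlam.le]
        congr 1
        rw [ENNReal.ofReal_add zero_le_one (by positivity)]
        simp
    _ ≤ _ := by gcongr

theorem lintegral_ofReal_le_tsum_measure {α : Type*} [MeasurableSpace α] {ν : Measure α}
    {F : α → ℝ} (hF : Measurable F) {lam : ℝ} (hlam : 0 < lam) :
    ∫⁻ v, ENNReal.ofReal (F v) ∂ν ≤
      ENNReal.ofReal lam * (ν univ + 2 * ∑' k : ℕ, ν {v | (1 + 2 * k) * lam ≤ F v}) := by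
  have hA : ∀ k : ℕ, MeasurableSet {v | (1 + 2 * k) * lam ≤ F v} :=
    fun k => measurableSet_le measurable_const hF
  calc ∫⁻ v, ENNReal.ofReal (F v) ∂ν ≤ ∫⁻ v, ENNReal.ofReal lam *
        (1 + 2 * ∑' k : ℕ, {v | (1 + 2 * k) * lam ≤ F v}.indicator 1 v) ∂ν := by
        refine lintegral_mono fun v => (ENNReal.ofReal_le_mul_one_add_tsum hlam).trans_eq ?_
        simp only [indicator_apply, mem_ofPred_eq, Pi.one_apply]
    _ = _ := by
        rw [lintegral_const_mul' _ _ ENNReal.ofReal_ne_top, lintegral_add_left measurable_const,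
          lintegral_const, one_mul, lintegral_const_mul' _ _ ENNReal.ofNat_ne_top,
          lintegral_tsum fun k => (measurable_one.indicator (hA k)).aemeasurable]
        simp only [lintegral_indicator_one (hA _)]

theorem integral_abs_sub_average_le {α : Type*} [MeasurableSpace α] {ν : Measure α}
    [IsFiniteMeasure ν] {f : α → ℝ} (hf : Integrable f ν) (c : ℝ) :
    ∫ x, |f x - ⨍ y, f y ∂ν| ∂ν ≤ 2 * ∫ x, |f x - c| ∂ν := by
  set m := ⨍ y, f y ∂ν
  have hfc : Integrable (fun x => |f x - c|) ν := (hf.sub (integrable_const c)).abs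
  have hmc : ν.real univ * |m - c| ≤ ∫ x, |f x - c| ∂ν := calc
    ν.real univ * |m - c| = |∫ x, (f x - c) ∂ν| := by
        rw [integral_sub hf (integrable_const c), integral_const, ← measure_smul_average,
          smul_eq_mul, smul_eq_mul, ← mul_sub, abs_mul, abs_of_nonneg measureReal_nonneg]
    _ ≤ ∫ x, |f x - c| ∂ν := abs_integral_le_integral_abs
  calc ∫ x, |f x - m| ∂ν ≤ ∫ x, (|f x - c| + |m - c|) ∂ν :=
        integral_mono (hf.sub (integrable_const m)).abs (hfc.add (integrable_const _)) fun x => by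
          simpa [abs_sub_comm m] using abs_sub_le (f x) c m
    _ = ∫ x, |f x - c| ∂ν + ν.real univ * |m - c| := by
        rw [integral_add hfc (integrable_const _), integral_const, smul_eq_mul]
    _ ≤ 2 * ∫ x, |f x - c| ∂ν := by linarith

theorem abs_sub_lt_of_measure_add_lt {α : Type*} [MeasurableSpace α] {μ : Measure α}
    {f : α → ℝ} {W : Set α} {a b lam : ℝ}
    (h : μ {v ∈ W | lam ≤ |f v - a|} + μ {v ∈ W | lam ≤ |f v - b|} < μ W) :
    |a - b| < 2 * lam := by
  obtain ⟨z, -, hza, hzb⟩ : ∃ z ∈ W, |f z - a| < lam ∧ |f z - b| < lam := by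
    by_contra! hcon
    refine h.not_ge ((measure_mono fun z hz => ?_).trans (measure_union_le _ _))
    by_cases ha : lam ≤ |f z - a|
    exacts [Or.inl ⟨hz, ha⟩, Or.inr ⟨hz, hcon z hz (not_le.1 ha)⟩]
  calc |a - b| ≤ |a - f z| + |f z - b| := abs_sub_le _ _ _
    _ = |f z - a| + |f z - b| := by rw [abs_sub_comm a]
    _ < 2 * lam := by linarith

section Doubling

variable {X : Type*} [MetricSpace X] [MeasurableSpace X]

structure IsBallDoubling (μ : Measure X) (κ : ℝ≥0) : Prop where
  measure_ball_pos : ∀ (x : X) {r : ℝ}, 0 < r → 0 < μ (ball x r)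
  measure_ball_lt_top : ∀ (x : X) (r : ℝ), μ (ball x r) < ⊤
  measure_ball_two_mul_le : ∀ (x : X) (r : ℝ), μ (ball x (2 * r)) ≤ κ * μ (ball x r)

theorem IsDoublingWith.isBallDoubling {μ : Measure X} {cD : ℝ} (h : IsDoublingWith μ cD) :
    IsBallDoubling μ cD.toNNReal where
  measure_ball_pos x _ hr := (h.2.1 x _ hr).1
  measure_ball_lt_top x r := by
    rcases lt_or_ge 0 r with hr | hr
    · exact (h.2.1 x r hr).2
    · simp [ball_eq_empty.2 hr]
  measure_ball_two_mul_le x r := by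
    rcases lt_or_ge 0 r with hr | hr
    · exact h.2.2 x x r hr ⟨x, mem_ball_self (by linarith), mem_ball_self hr⟩
    · simp [ball_eq_empty.2 (by linarith : 2 * r ≤ 0)]

namespace IsBallDoubling

variable {μ : Measure X} {κ : ℝ≥0}

theorem measure_ball_le_pow_mul (h : IsBallDoubling μ κ) (n : ℕ) (x : X) (r : ℝ) :
    μ (ball x (2 ^ n * r)) ≤ κ ^ n * μ (ball x r) := by
  induction n generalizing r with
  | zero => simp
  | succ n ih =>
    calc μ (ball x (2 ^ (n + 1) * r)) = μ (ball x (2 ^ n * (2 * r))) := by ring_nf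
      _ ≤ κ ^ n * μ (ball x (2 * r)) := ih _
      _ ≤ κ ^ n * (κ * μ (ball x r)) := by gcongr; exact h.measure_ball_two_mul_le x r
      _ = κ ^ (n + 1) * μ (ball x r) := by ring

theorem measure_ball_le_of_le (h : IsBallDoubling μ κ) (n : ℕ) (x : X) {a b : ℝ}
    (hab : a ≤ 2 ^ n * b) : μ (ball x a) ≤ κ ^ n * μ (ball x b) :=
  (measure_mono (ball_subset_ball hab)).trans (h.measure_ball_le_pow_mul n x b)

theorem one_le [Nonempty X] (h : IsBallDoubling μ κ) : 1 ≤ κ := by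
  obtain ⟨x⟩ := ‹Nonempty X›
  have h0 := (h.measure_ball_pos x one_pos).ne'
  have htop := (h.measure_ball_lt_top x 1).ne
  have hle : 1 * μ (ball x 1) ≤ κ * μ (ball x 1) :=
    (one_mul (μ (ball x 1))).symm ▸
      (measure_mono (ball_subset_ball (by norm_num))).trans (h.measure_ball_two_mul_le x 1)
  exact_mod_cast (ENNReal.mul_le_mul_iff_left h0 htop).1 hle

theorem measure_closedBall_lt_top (h : IsBallDoubling μ κ) (x : X) (r : ℝ) :
    μ (closedBall x r) < ⊤ :=
  (measure_mono (closedBall_subset_ball (lt_add_one r))).trans_lt (h.measure_ball_lt_top x _)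

theorem isLocallyFiniteMeasure (h : IsBallDoubling μ κ) : IsLocallyFiniteMeasure μ :=
  ⟨fun x => ⟨ball x 1, ball_mem_nhds x one_pos, h.measure_ball_lt_top x 1⟩⟩

theorem isUnifLocDoublingMeasure (h : IsBallDoubling μ κ) : IsUnifLocDoublingMeasure μ := by
  refine ⟨⟨κ ^ 2, ?_⟩⟩
  filter_upwards [self_mem_nhdsWithin] with r (hr : 0 < r) x
  calc μ (closedBall x (2 * r)) ≤ μ (ball x (2 ^ 2 * r)) :=
        measure_mono (closedBall_subset_ball (by linarith))
    _ ≤ κ ^ 2 * μ (ball x r) := h.measure_ball_le_pow_mul 2 x r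
    _ ≤ (κ ^ 2 : ℝ≥0) * μ (closedBall x r) := by
        push_cast; gcongr; exact ball_subset_closedBall

theorem isSeparated_countable [BorelSpace X] (h : IsBallDoubling μ κ) {ε : ℝ≥0} (hε : 0 < ε)
    {N : Set X} (hN : IsSeparated ε N) : N.Countable := by
  rcases N.eq_empty_or_nonempty with rfl | ⟨y, -⟩
  · exact countable_empty
  have hdisj : N.PairwiseDisjoint fun z => ball z (ε / 2) := by
    intro a ha b hb hab
    refine ball_disjoint_ball ?_
    have := hN ha hb hab
    simp only [edist_nndist, ENNReal.coe_lt_coe, ← NNReal.coe_lt_coe, coe_nndist] at this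
    linarith
  rw [← inter_univ N, ← iUnion_ball_nat y, inter_iUnion]
  refine countable_iUnion fun n => ?_
  have hfin : μ (⋃ z : ↥(N ∩ ball y n), ball (z : X) (ε / 2)) ≠ ⊤ := by
    refine ne_top_of_le_ne_top (h.measure_ball_lt_top y (n + ε)).ne (measure_mono ?_)
    refine iUnion_subset fun z => ball_subset_ball' ?_
    linarith [mem_ball.1 z.2.2, ε.coe_nonneg]
  have hcount := Measure.countable_meas_pos_of_disjoint_of_meas_iUnion_ne_top μ
    (As := fun z : ↥(N ∩ ball y n) => ball (z : X) (ε / 2)) (fun _ => measurableSet_ball)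
    (fun a b hab => hdisj a.2.1 b.2.1 (Subtype.coe_injective.ne hab)) hfin
  simp only [h.measure_ball_pos _ (half_pos (NNReal.coe_pos.2 hε)), ofPred_true,
    countable_univ_iff] at hcount
  exact countable_coe_iff.1 hcount

theorem secondCountableTopology [BorelSpace X] (h : IsBallDoubling μ κ) :
    SecondCountableTopology X := by
  refine Metric.secondCountable_of_almost_dense_set fun ε hε => ?_
  obtain ⟨N, hN⟩ := zorn_subset {N : Set X | N ⊆ univ ∧ IsSeparated ε.toNNReal N}
    fun c hc hchain => ⟨⋃₀ c, ⟨subset_univ _,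
      (pairwise_sUnion hchain.directedOn).2 fun a ha => (hc ha).2⟩,
      fun _ => subset_sUnion_of_mem⟩
  refine ⟨N, h.isSeparated_countable (Real.toNNReal_pos.2 hε) hN.prop.2, fun x => ?_⟩
  obtain ⟨y, hy, hxy⟩ := IsCover.of_maximal_isSeparated hN (mem_univ x)
  refine ⟨y, hy, ?_⟩
  have : edist x y ≤ ENNReal.ofReal ε := hxy
  rwa [edist_dist, ENNReal.ofReal_le_ofReal_iff hε.le] at this

end IsBallDoubling
end Doubling

section Covering

variable {X : Type*} [MetricSpace X] [MeasurableSpace X] [BorelSpace X]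
  [SecondCountableTopology X] {μ : Measure X}

theorem ae_exists_measure_closedBall_le_two_mul_inter [IsLocallyFiniteMeasure μ]
    [IsUnifLocDoublingMeasure μ] (E : Set X) :
    ∀ᵐ w ∂μ.restrict E, ∃ t, 0 < t ∧ μ (closedBall w t) ≤ 2 * μ (E ∩ closedBall w t) := by
  filter_upwards [IsUnifLocDoublingMeasure.ae_tendsto_measure_inter_div μ E 1] with w hw
  have hlim := hw (fun _ => w) id tendsto_id
    (eventually_nhdsWithin_of_forall fun t (ht : 0 < t) =>
      mem_closedBall_self (by simpa using ht.le))
  obtain ⟨t, hhalf, ht⟩ :=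
    ((hlim.eventually (lt_mem_nhds (by norm_num : (2⁻¹ : ℝ≥0∞) < 1))).and
      self_mem_nhdsWithin).exists
  refine ⟨t, ht, ?_⟩
  rw [ENNReal.lt_div_iff_mul_lt (Or.inr (by simp)) (Or.inr (by simp))] at hhalf
  calc μ (closedBall w t) = 2 * (2⁻¹ * μ (closedBall w t)) := by
        rw [← mul_assoc, ENNReal.mul_inv_cancel two_ne_zero ENNReal.ofNat_ne_top, one_mul]
    _ ≤ 2 * μ (E ∩ closedBall w t) := by gcongr; exact hhalf.le

theorem measure_le_mul_of_ae_exists_ball {T E : Set X} (hE : MeasurableSet E) {K : ℝ≥0∞}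
    {R : ℝ} (h : ∀ᵐ w ∂μ.restrict T, ∃ ρ, 0 < ρ ∧ ρ ≤ R ∧
      μ (T ∩ ball w (4 * ρ)) ≤ K * μ (E ∩ closedBall w ρ)) :
    μ T ≤ K * μ E := by
  set P : X → Prop := fun w => ∃ ρ, 0 < ρ ∧ ρ ≤ R ∧
      μ (T ∩ ball w (4 * ρ)) ≤ K * μ (E ∩ closedBall w ρ)
  set T' := {w | P w} ∩ T
  have hT : μ T ≤ μ T' := by
    have hnull : μ ({w | P w}ᶜ ∩ T) = 0 :=
      le_antisymm ((Measure.le_restrict_apply _ _).trans (ae_iff.1 h).le) zero_le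
    calc μ T ≤ μ (T' ∪ ({w | P w}ᶜ ∩ T)) := measure_mono fun w hw => by
          by_cases hP : P w
          exacts [Or.inl ⟨hP, hw⟩, Or.inr ⟨hP, hw⟩]
      _ ≤ μ T' := (measure_union_le _ _).trans (by rw [hnull, add_zero])
  choose! ρ hρ0 hρR hρ using fun w (hw : w ∈ T') => hw.1
  obtain ⟨u, huT, hudisj, hucov⟩ := Vitali.exists_disjoint_subfamily_covering_enlargement
    (fun w => closedBall w (ρ w)) T' ρ 2 one_lt_two (fun w hw => (hρ0 w hw).le) R hρR
    fun w hw => ⟨w, mem_closedBall_self (hρ0 w hw).le⟩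
  have hu : u.Countable := (hudisj.mono fun _ => ball_subset_closedBall).countable_of_isOpen
    (fun _ _ => isOpen_ball) fun w hw => nonempty_ball.2 (hρ0 w (huT hw))
  have hcover : T' ⊆ ⋃ b ∈ u, T ∩ ball b (4 * ρ b) := by
    intro a ha
    obtain ⟨b, hb, ⟨p, hpa, hpb⟩, hab⟩ := hucov a ha
    refine mem_biUnion hb ⟨ha.2, ?_⟩
    have := dist_triangle_left a b p
    rw [mem_closedBall] at hpa hpb
    rw [mem_ball]
    linarith [hρ0 b (huT hb)]
  calc μ T ≤ μ (⋃ b ∈ u, T ∩ ball b (4 * ρ b)) := hT.trans (measure_mono hcover)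
    _ ≤ ∑' b : u, μ (T ∩ ball b (4 * ρ b)) := measure_biUnion_le μ hu _
    _ ≤ ∑' b : u, K * μ (E ∩ closedBall b (ρ b)) :=
        ENNReal.tsum_le_tsum fun b => hρ b (huT b.2)
    _ = K * μ (⋃ b ∈ u, E ∩ closedBall b (ρ b)) := by
        rw [ENNReal.tsum_mul_left, measure_biUnion hu
          (hudisj.mono fun _ => inter_subset_right) fun _ _ => hE.inter measurableSet_closedBall]
    _ ≤ K * μ E := by gcongr; exact iUnion₂_subset fun _ _ => inter_subset_left

end Covering

section Stromberg

variable {X : Type*} [MetricSpace X] [MeasurableSpace X]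

def deviationSet (f : X → ℝ) (x : X) (r a t : ℝ) : Set X := {v ∈ ball x r | t ≤ |f v - a|}

theorem measurableSet_deviationSet [BorelSpace X] {f : X → ℝ} (hf : Measurable f) (x : X)
    (r a t : ℝ) : MeasurableSet (deviationSet f x r a t) :=
  measurableSet_ball.inter (measurableSet_le measurable_const (hf.sub_const a).abs)

variable {μ : Measure X} {κ g : ℝ≥0}

theorem IsBallDoubling.exists_deviationSet_le (h : IsBallDoubling μ κ) {f : X → ℝ}
    {lam : ℝ} {γ γ' : ℝ≥0∞} (hγ : γ < γ')
    (hyp : ∀ x r, 0 < r → ⨅ a : ℝ, μ (deviationSet f x r a lam) ≤ γ * μ (ball x r)) :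
    ∃ c : X → ℝ → ℝ, ∀ x r, 0 < r → μ (deviationSet f x r (c x r) lam) ≤ γ' * μ (ball x r) := by
  have : ∀ x r, ∃ a, 0 < r → μ (deviationSet f x r a lam) ≤ γ' * μ (ball x r) := fun x r => by
    rcases lt_or_ge 0 r with hr | hr
    · obtain ⟨a, ha⟩ := iInf_lt_iff.1 ((hyp x r hr).trans_lt
        ((ENNReal.mul_lt_mul_iff_left (h.measure_ball_pos x hr).ne'
          (h.measure_ball_lt_top x r).ne).2 hγ))
      exact ⟨a, fun _ => ha.le⟩
    · exact ⟨0, fun hr' => absurd hr' (not_lt.2 hr)⟩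
  choose c hc using this
  exact ⟨c, hc⟩

theorem IsBallDoubling.exists_stopping_radius (h : IsBallDoubling μ κ) (hq : 2 * κ ^ 3 * g < 1)
    {E : Set X} {y w : X} {s : ℝ} (hE : μ E ≤ g * μ (ball y s)) (hw : w ∈ ball y (s / 2))
    (hdens : ∃ t, 0 < t ∧ μ (closedBall w t) ≤ 2 * μ (E ∩ closedBall w t)) :
    ∃ t, 0 < t ∧ t < s / 4 ∧ μ (closedBall w t) ≤ 2 * μ (E ∩ closedBall w t) ∧
      2 * μ (E ∩ closedBall w (2 * t)) < μ (closedBall w (2 * t)) := by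
  set S := {t | 0 < t ∧ μ (closedBall w t) ≤ 2 * μ (E ∩ closedBall w t)}
  have hS : ∀ t ∈ S, t < s / 4 := by
    rintro t ⟨ht, htE⟩
    by_contra! hst
    have hs : 0 < s / 4 := by linarith [dist_nonneg.trans_lt (mem_ball.1 hw)]
    set B := ball w (s / 4)
    have hyw : ball y s ⊆ ball w (2 ^ 3 * (s / 4)) := fun z hz => by
      rw [mem_ball] at hz hw ⊢
      linarith [dist_triangle z y w, dist_comm y w]
    have : μ B < μ B := calc
      μ B ≤ μ (closedBall w t) :=
          measure_mono (ball_subset_closedBall.trans (closedBall_subset_closedBall hst))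
      _ ≤ 2 * μ E := htE.trans (by gcongr; exact inter_subset_left)
      _ ≤ 2 * (g * (κ ^ 3 * μ B)) := by
          gcongr
          exact hE.trans
            (by gcongr; exact (measure_mono hyw).trans (h.measure_ball_le_pow_mul 3 w _))
      _ = ((2 * κ ^ 3 * g : ℝ≥0) : ℝ≥0∞) * μ B := by push_cast; ring
      _ < 1 * μ B := (ENNReal.mul_lt_mul_iff_left (h.measure_ball_pos w hs).ne'
          (h.measure_ball_lt_top w _).ne).2 (ENNReal.coe_lt_one_iff.2 hq)
      _ = μ B := one_mul _
    exact lt_irrefl _ this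
  obtain ⟨t, ⟨ht, htE⟩, h2t⟩ := exists_mem_two_mul_notMem (fun t ht => ht.1) hdens
    ⟨s / 4, fun t ht => (hS t ht).le⟩
  refine ⟨t, ht, hS t ⟨ht, htE⟩, htE, ?_⟩
  exact not_le.1 fun hle => h2t ⟨by positivity, hle⟩

theorem IsBallDoubling.exists_radius_measure_deviationSet_le [BorelSpace X]
    (h : IsBallDoubling μ κ) (hq : 2 * κ ^ 3 * g ≤ 2⁻¹) {f : X → ℝ} {lam τ : ℝ} {M : ℝ≥0}
    {c : X → ℝ → ℝ} (hc : ∀ x r, 0 < r → μ (deviationSet f x r (c x r) lam) ≤ g * μ (ball x r))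
    (ih : ∀ x r, 0 < r → μ (deviationSet f x (r / 2) (c x r) τ) ≤ M * μ (ball x r))
    {y w : X} {s : ℝ} (hs : 0 < s) (hw : w ∈ ball y (s / 2))
    (hdens : ∃ t, 0 < t ∧
      μ (closedBall w t) ≤ 2 * μ (deviationSet f y s (c y s) lam ∩ closedBall w t)) :
    ∃ ρ, 0 < ρ ∧ ρ ≤ s / 4 ∧
      μ (deviationSet f y (s / 2) (c y s) (τ + 2 * lam) ∩ ball w (4 * ρ)) ≤
        (2 * κ ^ 3 * M : ℝ≥0) * μ (deviationSet f y s (c y s) lam ∩ closedBall w ρ) := by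
  set E := deviationSet f y s (c y s) lam
  obtain ⟨t, ht, hts, htE, h2t⟩ :=
    h.exists_stopping_radius (hq.trans_lt (by norm_num)) (hc y s hs) hw hdens
  refine ⟨t, ht, hts.le, ?_⟩
  set W := closedBall w (2 * t)
  set c' := c w (8 * t)
  have hκg : κ ^ 2 * g ≤ 2⁻¹ := calc
    κ ^ 2 * g ≤ 2 * κ ^ 3 * g := by
      have : Nonempty X := ⟨w⟩
      gcongr
      exact le_mul_of_one_le_of_le one_le_two (pow_le_pow_right₀ h.one_le (by norm_num))
    _ ≤ 2⁻¹ := hq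
  have hE : μ {v ∈ W | lam ≤ |f v - c y s|} < μ W / 2 := by
    have hsub : {v ∈ W | lam ≤ |f v - c y s|} ⊆ E ∩ W := fun v hv => by
      refine ⟨⟨?_, hv.2⟩, hv.1⟩
      have := mem_closedBall.1 hv.1
      rw [mem_ball] at hw ⊢
      linarith [dist_triangle v w y]
    exact (measure_mono hsub).trans_lt
      ((ENNReal.lt_div_iff_mul_lt (by simp) (by simp)).2 (mul_comm _ (2 : ℝ≥0∞) ▸ h2t))
  have hU : μ {v ∈ W | lam ≤ |f v - c'|} ≤ μ W / 2 := calc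
    μ {v ∈ W | lam ≤ |f v - c'|} ≤ μ (deviationSet f w (8 * t) c' lam) :=
        measure_mono fun v hv => ⟨mem_ball.2 (by linarith [mem_closedBall.1 hv.1]), hv.2⟩
    _ ≤ g * (κ ^ 2 * μ W) := by
        refine (hc w _ (by positivity)).trans ?_
        gcongr
        exact (h.measure_ball_le_of_le 2 w (a := 8 * t) (b := 2 * t) (by linarith)).trans
          (by gcongr; exact ball_subset_closedBall)
    _ ≤ 2⁻¹ * μ W := by
        rw [← mul_assoc, mul_comm (g : ℝ≥0∞)]
        gcongr
        simpa using ENNReal.coe_le_coe.2 hκg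
    _ = μ W / 2 := by rw [ENNReal.div_eq_inv_mul]
  have hclose : |c y s - c'| < 2 * lam := abs_sub_lt_of_measure_add_lt <| calc
    _ < μ W / 2 + μ W / 2 := ENNReal.add_lt_add_of_lt_of_le (ne_top_of_le_ne_top
        (ENNReal.div_ne_top (h.measure_closedBall_lt_top w _).ne two_ne_zero) hU) hE hU
    _ = μ W := ENNReal.add_halves _
  calc μ (deviationSet f y (s / 2) (c y s) (τ + 2 * lam) ∩ ball w (4 * t))
      ≤ μ (deviationSet f w (8 * t / 2) c' τ) := measure_mono fun v ⟨⟨_, hv⟩, hvw⟩ => by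
        refine ⟨by rwa [show 8 * t / 2 = 4 * t by ring], ?_⟩
        have := abs_sub_le (f v) c' (c y s)
        rw [abs_sub_comm c'] at this
        linarith
    _ ≤ M * μ (ball w (8 * t)) := ih w _ (by positivity)
    _ ≤ M * (κ ^ 3 * (2 * μ (E ∩ closedBall w t))) := by
        gcongr
        exact (h.measure_ball_le_of_le 3 w (a := 8 * t) (b := t) (by linarith)).trans
          (by gcongr; exact (measure_mono ball_subset_closedBall).trans htE)
    _ = (2 * κ ^ 3 * M : ℝ≥0) * μ (E ∩ closedBall w t) := by push_cast; ring

theorem IsBallDoubling.measure_deviationSet_le [BorelSpace X] (h : IsBallDoubling μ κ)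
    (hq : 2 * κ ^ 3 * g ≤ 2⁻¹) {f : X → ℝ} (hf : Measurable f) {lam : ℝ} (hlam : 0 ≤ lam)
    {c : X → ℝ → ℝ} (hc : ∀ x r, 0 < r → μ (deviationSet f x r (c x r) lam) ≤ g * μ (ball x r))
    (k : ℕ) (y : X) {s : ℝ} (hs : 0 < s) :
    μ (deviationSet f y (s / 2) (c y s) ((1 + 2 * k) * lam)) ≤
      ((2 * κ ^ 3 * g) ^ k * g : ℝ≥0) * μ (ball y s) := by
  have := h.secondCountableTopology
  have := h.isLocallyFiniteMeasure
  have := h.isUnifLocDoublingMeasure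
  induction k generalizing y s with
  | zero =>
    have hsub : deviationSet f y (s / 2) (c y s) ((1 + 2 * (0 : ℕ)) * lam) ⊆
        deviationSet f y s (c y s) lam := fun v hv =>
      ⟨ball_subset_ball (by linarith) hv.1, by simpa using hv.2⟩
    simpa using (measure_mono hsub).trans (hc y s hs)
  | succ k ih =>
    set E := deviationSet f y s (c y s) lam
    set T := deviationSet f y (s / 2) (c y s) ((1 + 2 * (k + 1 : ℕ)) * lam)
    have hT : MeasurableSet T := measurableSet_deviationSet hf _ _ _ _
    have hTE : T ⊆ E := fun v hv =>
      ⟨ball_subset_ball (by linarith) hv.1, le_trans (by push_cast; nlinarith) hv.2⟩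
    have hlevel : (1 + 2 * (k + 1 : ℕ)) * lam = (1 + 2 * k) * lam + 2 * lam := by
      push_cast; ring
    calc μ T ≤ (2 * κ ^ 3 * ((2 * κ ^ 3 * g) ^ k * g) : ℝ≥0) * μ E := by
          refine measure_le_mul_of_ae_exists_ball (measurableSet_deviationSet hf _ _ _ _)
            (R := s / 4) ?_
          filter_upwards [ae_restrict_mem hT, ae_restrict_of_ae_restrict_of_subset hTE
            (ae_exists_measure_closedBall_le_two_mul_inter E)] with w hwT hdens
          obtain ⟨ρ, hρ, hρs, hle⟩ := h.exists_radius_measure_deviationSet_le hq hc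
            (fun x r hr => ih x hr) hs hwT.1 hdens
          exact ⟨ρ, hρ, hρs, by rwa [← hlevel] at hle⟩
      _ ≤ (2 * κ ^ 3 * ((2 * κ ^ 3 * g) ^ k * g) : ℝ≥0) * (g * μ (ball y s)) := by
          gcongr; exact hc y s hs
      _ = ((2 * κ ^ 3 * g) ^ (k + 1) * g : ℝ≥0) * μ (ball y s) := by push_cast; ring

theorem IsBallDoubling.lintegral_abs_sub_le [BorelSpace X] (h : IsBallDoubling μ κ)
    (hq : 2 * κ ^ 3 * g ≤ 2⁻¹) {f : X → ℝ} (hf : Measurable f) {lam : ℝ} (hlam : 0 < lam)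
    {c : X → ℝ → ℝ} (hc : ∀ x r, 0 < r → μ (deviationSet f x r (c x r) lam) ≤ g * μ (ball x r))
    (x : X) {r : ℝ} (hr : 0 < r) :
    ∫⁻ v in ball x r, ENNReal.ofReal |f v - c x (2 * r)| ∂μ ≤
      2 * ENNReal.ofReal lam * μ (ball x r) := by
  set B := ball x r
  have hκg : 4 * κ * g ≤ 1 := calc
    4 * κ * g ≤ 2 * (2 * κ ^ 3 * g) := by
      have : Nonempty X := ⟨x⟩
      rw [← mul_assoc, ← mul_assoc, show (2 : ℝ≥0) * 2 = 4 by norm_num]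
      gcongr
      exact le_self_pow₀ h.one_le (by norm_num)
    _ ≤ 2 * 2⁻¹ := by gcongr
    _ = 1 := mul_inv_cancel₀ two_ne_zero
  have hlevel : ∀ k : ℕ, μ.restrict B {v | (1 + 2 * k) * lam ≤ |f v - c x (2 * r)|} ≤
      2⁻¹ ^ k * (g * (κ * μ B)) := fun k => by
    rw [Measure.restrict_apply (measurableSet_le measurable_const (hf.sub_const _).abs)]
    calc μ ({v | (1 + 2 * k) * lam ≤ |f v - c x (2 * r)|} ∩ B)
        = μ (deviationSet f x (2 * r / 2) (c x (2 * r)) ((1 + 2 * k) * lam)) := by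
          rw [show 2 * r / 2 = r by ring, inter_comm]; rfl
      _ ≤ ((2 * κ ^ 3 * g) ^ k * g : ℝ≥0) * μ (ball x (2 * r)) :=
          h.measure_deviationSet_le hq hf hlam.le hc k x (by positivity)
      _ ≤ 2⁻¹ ^ k * (g * (κ * μ B)) := by
          push_cast
          rw [mul_assoc]
          gcongr
          · simpa using ENNReal.coe_le_coe.2 hq
          · exact h.measure_ball_two_mul_le x r
  calc ∫⁻ v in B, ENNReal.ofReal |f v - c x (2 * r)| ∂μ
      ≤ ENNReal.ofReal lam * (μ B + 2 * ∑' k : ℕ,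
          μ.restrict B {v | (1 + 2 * k) * lam ≤ |f v - c x (2 * r)|}) := by
        simpa using
          lintegral_ofReal_le_tsum_measure (ν := μ.restrict B) (hf.sub_const _).abs hlam
    _ ≤ ENNReal.ofReal lam * (μ B + 2 * ∑' k : ℕ, 2⁻¹ ^ k * (g * (κ * μ B))) := by
        gcongr with k; exact hlevel k
    _ = ENNReal.ofReal lam * (μ B + (4 * κ * g : ℝ≥0) * μ B) := by
        rw [ENNReal.tsum_mul_right, ENNReal.tsum_geometric_two]; push_cast; ring
    _ ≤ ENNReal.ofReal lam * (μ B + 1 * μ B) := by gcongr; exact_mod_cast hκg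
    _ = 2 * ENNReal.ofReal lam * μ B := by ring

theorem IsBallDoubling.isFiniteMeasure_restrict_ball (h : IsBallDoubling μ κ) (x : X)
    (r : ℝ) :
    IsFiniteMeasure (μ.restrict (ball x r)) :=
  isFiniteMeasure_restrict.2 (h.measure_ball_lt_top x r).ne

theorem IsBallDoubling.integrableOn_ball [BorelSpace X] (h : IsBallDoubling μ κ)
    (hq : 2 * κ ^ 3 * g ≤ 2⁻¹) {f : X → ℝ} (hf : Measurable f) {lam : ℝ} (hlam : 0 < lam)
    {c : X → ℝ → ℝ} (hc : ∀ x r, 0 < r → μ (deviationSet f x r (c x r) lam) ≤ g * μ (ball x r))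
    (x : X) {r : ℝ} (hr : 0 < r) : IntegrableOn f (ball x r) μ := by
  have := h.isFiniteMeasure_restrict_ball x r
  have hfc : IntegrableOn (fun v => f v - c x (2 * r)) (ball x r) μ := by
    refine ⟨(hf.sub_const _).aestronglyMeasurable, ?_⟩
    simp only [HasFiniteIntegral, Real.enorm_eq_ofReal_abs]
    exact (h.lintegral_abs_sub_le hq hf hlam hc x hr).trans_lt
      (ENNReal.mul_lt_top (by finiteness) (h.measure_ball_lt_top x r))
  simpa [IntegrableOn] using (integrable_add_const_iff (c := c x (2 * r))).2 hfc

theorem IsBallDoubling.avgOsc_le [BorelSpace X] (h : IsBallDoubling μ κ)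
    (hq : 2 * κ ^ 3 * g ≤ 2⁻¹) {f : X → ℝ} (hf : Measurable f) {lam : ℝ} (hlam : 0 < lam)
    {c : X → ℝ → ℝ} (hc : ∀ x r, 0 < r → μ (deviationSet f x r (c x r) lam) ≤ g * μ (ball x r))
    (x : X) {r : ℝ} (hr : 0 < r) : avgOsc μ f x r ≤ 4 * lam := by
  set B := ball x r
  have := h.isFiniteMeasure_restrict_ball x r
  have hB : 0 < μ.real B :=
    ENNReal.toReal_pos (h.measure_ball_pos x hr).ne' (h.measure_ball_lt_top x r).ne
  have hdev : ∫ v in B, |f v - c x (2 * r)| ∂μ ≤ 2 * lam * μ.real B := by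
    rw [integral_eq_lintegral_of_nonneg_ae (ae_of_all _ fun _ => abs_nonneg _)
      (hf.sub_const _).abs.aestronglyMeasurable]
    calc (∫⁻ v in B, ENNReal.ofReal |f v - c x (2 * r)| ∂μ).toReal
        ≤ (2 * ENNReal.ofReal lam * μ B).toReal :=
          ENNReal.toReal_mono (ENNReal.mul_ne_top (by finiteness) (h.measure_ball_lt_top x r).ne)
            (h.lintegral_abs_sub_le hq hf hlam hc x hr)
      _ = 2 * lam * μ.real B := by simp [ENNReal.toReal_mul, hlam.le, measureReal_def]
  rw [avgOsc, average_eq, smul_eq_mul, measureReal_restrict_apply_univ]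
  calc (μ.real B)⁻¹ * ∫ v in B, |f v - ⨍ z in B, f z ∂μ| ∂μ
      ≤ (μ.real B)⁻¹ * (2 * (2 * lam * μ.real B)) := by
        gcongr
        exact (integral_abs_sub_average_le (h.integrableOn_ball hq hf hlam hc x hr) _).trans
          (by gcongr)
    _ = 4 * lam := by field_simp; ring

end Stromberg

theorem stromberg_lemma_general (cD : ℝ) :
    ∃ C : ℝ, 0 < C ∧
      ∀ (X : Type) [MetricSpace X] [CompleteSpace X] [MeasurableSpace X] [BorelSpace X]
        (μ : Measure X), IsDoublingWith μ cD →
      ∀ f : X → ℝ, Measurable f →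
      ∀ γ lam : ℝ, 0 < γ → γ < (4 * cD ^ 3)⁻¹ → 0 < lam →
      (∀ (x : X) (r : ℝ), 0 < r →
        (⨅ c : ℝ, μ {y ∈ ball x r | lam ≤ |f y - c|}) ≤ ENNReal.ofReal γ * μ (ball x r)) →
      MemBMO μ f ∧ bmoNorm μ f ≤ C * lam := by
  refine ⟨4, four_pos, fun X _ _ _ _ μ hμ f hf γ lam hγ hγlt hlam hyp => ?_⟩
  have h := hμ.isBallDoubling
  have hcD : 0 < cD := one_pos.trans hμ.1
  obtain ⟨g, hγg, hg⟩ := exists_between hγlt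
  have hq : 2 * cD.toNNReal ^ 3 * g.toNNReal ≤ 2⁻¹ := by
    rw [← NNReal.coe_le_coe]
    push_cast [Real.coe_toNNReal _ hcD.le, Real.coe_toNNReal _ (hγ.trans hγg).le]
    have h4 : (0 : ℝ) < 4 * cD ^ 3 := by positivity
    have := mul_lt_mul_of_pos_left hg h4
    rw [mul_inv_cancel₀ h4.ne'] at this
    linarith
  obtain ⟨c, hc⟩ := h.exists_deviationSet_le
    ((ENNReal.ofReal_lt_ofReal_iff (hγ.trans hγg)).2 hγg) hyp
  refine ⟨⟨fun x => ⟨ball x 1, ball_mem_nhds x one_pos,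
    h.integrableOn_ball hq hf hlam hc x one_pos⟩, ⟨4 * lam, ?_⟩⟩,
    Real.sSup_le ?_ (by positivity)⟩ <;>
  · rintro _ ⟨x, r, hr, rfl⟩
    exact h.avgOsc_le hq hf hlam hc x hr

/-- Lemma 3.8, Strömberg-type lemma: there is `C > 0` depending only on
`c_D` such that if `inf_c μ({x ∈ B : |f(x) − c| ≥ λ}) ≤ γ μ(B)` for every ball `B`,
with `0 < γ < (4 c_D³)⁻¹` and `λ > 0`, then `f ∈ BMO(X)` with `‖f‖_* ≤ C λ`. -/
theorem stromberg_lemma (cD : ℝ) (hcD : 1 < cD) :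
    ∃ C : ℝ, 0 < C ∧
      ∀ (X : Type) [MetricSpace X] [CompleteSpace X] [MeasurableSpace X] [BorelSpace X]
        (μ : Measure X), IsDoublingWith μ cD →
      ∀ f : X → ℝ, Measurable f →
      ∀ γ lam : ℝ, 0 < γ → γ < (4 * cD ^ 3)⁻¹ → 0 < lam →
      (∀ (x : X) (r : ℝ), 0 < r →
        (⨅ c : ℝ, μ {y ∈ ball x r | lam ≤ |f y - c|}) ≤ ENNReal.ofReal γ * μ (ball x r)) →
      MemBMO μ f ∧ bmoNorm μ f ≤ C * lam :=
  stromberg_lemma_general cD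
end
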